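/- arXiv:2409.04897 — 4 statements merged into one kernel-verified Lean document; each statement's English description precedes it below -/
import Mathlib

section
/- Let two instances of the selection setting have the same n distinct observed utilities and the same capacities k_1,…,k_p, and preference profiles σ and σ' that agree on every candidate except possibly one candidate i*. Let M and M' be the unique stable assignments of the two instances. Then the number of candidates i with M(i) ≠ M'(i) is at most p + 1; moreover, for every institution ℓ, at most one candidate other than i* is assigned to ℓ by M but not by M', and at most one candidate other than i* is assigned to ℓ by M' but not by M. -/
/-!
Going down the utility order, stability forces each candidate to take its favourite institution
among those not yet filled by candidates of higher utility. On every such upper set of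
candidates, the multisets of seats filled by `M` and by `M'` differ by exchanging one surplus
seat `a` of `M` for one surplus seat `b` of `M'`, and `a = b` above `istar`. A candidate other
than `istar` whom `M` and `M'` treat differently takes the surplus seat of one side (the
institution it prefers is full on the other side), and its choice on the other side becomes the
new surplus there. So the institution it prefers is full in both assignments from then on: these
institutions are distinct, which gives the bound `p + 1`. A candidate placed at `ℓ` by `M` only
leaves `ℓ`, at every lower level, a surplus seat of `M` or full in `M`; either way no later
candidate can be placed at `ℓ` by `M` only.
-/

open MeasureTheory Finset

/-- The set of candidates assigned to institution `ℓ` by the (partial) assignment `M`. -/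
def assignedTo {n p : ℕ} (M : Fin n → Option (Fin p)) (ℓ : Fin p) : Finset (Fin n) :=
  Finset.univ.filter fun i => M i = some ℓ

/-- `M` is an assignment respecting the capacities `k`. -/
def IsAssignment {n p : ℕ} (k : Fin p → ℕ) (M : Fin n → Option (Fin p)) : Prop :=
  ∀ ℓ : Fin p, (assignedTo M ℓ).card ≤ k ℓ

/-- Candidate with preference order `σi` (a ranking of the institutions, smaller rank = more
preferred) strictly prefers institution `j` to the current assignment `cur`; an unassigned
candidate strictly prefers every institution to being unassigned. -/
def Prefers {p : ℕ} (σi : Equiv.Perm (Fin p)) (j : Fin p) : Option (Fin p) → Prop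
  | none => True
  | some j' => σi j < σi j'

/-- The candidate–institution pair `(i, j)` blocks the assignment `M`. -/
def Blocks {n p : ℕ} (uhat : Fin n → ℝ) (σ : Fin n → Equiv.Perm (Fin p))
    (k : Fin p → ℕ) (M : Fin n → Option (Fin p)) (i : Fin n) (j : Fin p) : Prop :=
  M i ≠ some j ∧ Prefers (σ i) j (M i) ∧
    ((assignedTo M j).card < k j ∨ ∃ i' ∈ assignedTo M j, uhat i' < uhat i)

/-- `M` is a stable assignment: it respects capacities and no pair blocks it. -/
def IsStable {n p : ℕ} (uhat : Fin n → ℝ) (σ : Fin n → Equiv.Perm (Fin p))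
    (k : Fin p → ℕ) (M : Fin n → Option (Fin p)) : Prop :=
  IsAssignment k M ∧ ∀ i j, ¬ Blocks uhat σ k M i j

open Function

namespace Selection

variable {n p : ℕ}

noncomputable def above (uhat : Fin n → ℝ) (i : Fin n) : Finset (Fin n) :=
  univ.filter fun x => uhat i < uhat x

def load (M : Fin n → Option (Fin p)) (S : Finset (Fin n)) (ℓ : Fin p) : ℕ :=
  #{x ∈ S | M x = some ℓ}

section Levels

variable {uhat : Fin n → ℝ}

theorem notMem_above_self (i : Fin n) : i ∉ above uhat i := by
  simp [above]

theorem insert_above_subset_above {i j : Fin n} (h : uhat j < uhat i) :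
    insert i (above uhat i) ⊆ above uhat j := by
  intro x hx
  simp only [above, mem_insert, mem_filter, mem_univ, true_and] at hx ⊢
  rcases hx with rfl | hx
  · exact h
  · exact h.trans hx

theorem above_eq_insert_of_forall_le (huhat : Injective uhat) {i j : Fin n}
    (hj : j ∈ above uhat i) (hmin : ∀ x ∈ above uhat i, uhat j ≤ uhat x) :
    above uhat i = insert j (above uhat j) := by
  ext x
  simp only [above, mem_insert, mem_filter, mem_univ, true_and] at hj hmin ⊢
  constructor
  · intro hx
    rcases eq_or_ne x j with rfl | hne
    · exact Or.inl rfl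
    · exact Or.inr ((hmin x hx).lt_of_ne fun h => hne (huhat h).symm)
  · rintro (rfl | hx)
    · exact hj
    · exact hj.trans hx

theorem above_induction (huhat : Injective uhat) {P : Finset (Fin n) → Prop} (h0 : P ∅)
    (hstep : ∀ j, P (above uhat j) → P (insert j (above uhat j))) (i : Fin n) :
    P (above uhat i) := by
  rcases (above uhat i).eq_empty_or_nonempty with h | h
  · rwa [h]
  obtain ⟨j, hj, hmin⟩ := exists_min_image _ uhat h
  have heq := above_eq_insert_of_forall_le huhat hj hmin
  have : (above uhat j).card < (above uhat i).card := by
    rw [heq]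
    exact card_lt_card (ssubset_insert (notMem_above_self j))
  rw [heq]
  exact hstep j (above_induction huhat h0 hstep j)
termination_by (above uhat i).card

end Levels

section Load

variable {M : Fin n → Option (Fin p)} {S T : Finset (Fin n)} {ℓ : Fin p}

theorem load_insert {x : Fin n} (hx : x ∉ S) :
    load M (insert x S) ℓ = load M S ℓ + if M x = some ℓ then 1 else 0 := by
  unfold load
  rw [filter_insert]
  split_ifs
  · exact card_insert_of_notMem fun h => hx (mem_filter.1 h).1
  · rfl

theorem load_mono (h : S ⊆ T) : load M S ℓ ≤ load M T ℓ :=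
  card_le_card (filter_subset_filter _ h)

theorem count_map_val : (S.val.map M).count (some ℓ) = load M S ℓ := by
  simp [load, Multiset.count_map, card_def, eq_comm]

end Load

theorem _root_.Prefers.ne {s : Equiv.Perm (Fin p)} {ℓ : Fin p} {u : Option (Fin p)}
    (h : Prefers s ℓ u) : u ≠ some ℓ := by
  rintro rfl
  exact lt_irrefl _ h

theorem exists_prefers_of_ne (s : Equiv.Perm (Fin p)) {u v : Option (Fin p)} (h : u ≠ v) :
    ∃ ℓ, (u = some ℓ ∧ Prefers s ℓ v) ∨ (v = some ℓ ∧ Prefers s ℓ u) := by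
  rcases u with _ | j <;> rcases v with _ | j'
  · exact absurd rfl h
  · exact ⟨j', Or.inr ⟨rfl, trivial⟩⟩
  · exact ⟨j, Or.inl ⟨rfl, trivial⟩⟩
  · rcases lt_or_gt_of_ne (s.injective.ne fun hj => h (congrArg some hj)) with hlt | hlt
    · exact ⟨j, Or.inl ⟨rfl, hlt⟩⟩
    · exact ⟨j', Or.inr ⟨rfl, hlt⟩⟩

section Stability

variable {uhat : Fin n → ℝ} {σ : Fin n → Equiv.Perm (Fin p)} {k : Fin p → ℕ}
  {M : Fin n → Option (Fin p)}

theorem _root_.IsStable.load_lt (hM : IsStable uhat σ k M) {i : Fin n} {j : Fin p}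
    (h : M i = some j) : load M (above uhat i) j < k j := by
  refine lt_of_lt_of_le (card_lt_card ?_) (hM.1 j)
  refine (ssubset_iff_of_subset (filter_subset_filter _ (subset_univ _))).2 ⟨i, ?_, ?_⟩
  · simp [h]
  · simp [above]

theorem _root_.IsStable.le_load (huhat : Injective uhat) (hM : IsStable uhat σ k M)
    {i : Fin n} {ℓ : Fin p} (h : Prefers (σ i) ℓ (M i)) : k ℓ ≤ load M (above uhat i) ℓ := by
  by_contra hlt
  refine hM.2 i ℓ ⟨h.ne, h, ?_⟩
  by_contra! hfull
  refine hlt (hfull.1.trans (card_le_card fun x hx => ?_))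
  have hxℓ : M x = some ℓ := (mem_filter.1 hx).2
  have hxi : x ≠ i := by
    rintro rfl
    exact h.ne hxℓ
  simp only [above, mem_filter, mem_univ, true_and]
  exact ⟨(hfull.2 x hx).lt_of_ne fun he => hxi (huhat he).symm, hxℓ⟩

end Stability

/-- `a` is the surplus seat of `M` on `S` and `b` that of `M'`; when `a = b` the two
assignments fill the same seats on `S`. -/
def Exchange (M M' : Fin n → Option (Fin p)) (S : Finset (Fin n)) (a b : Option (Fin p)) :
    Prop :=
  b ::ₘ S.val.map M = a ::ₘ S.val.map M'

namespace Exchange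

variable {M M' : Fin n → Option (Fin p)} {S : Finset (Fin n)} {a b : Option (Fin p)}
  {x : Fin n}

theorem symm (h : Exchange M M' S a b) : Exchange M' M S b a :=
  Eq.symm h

theorem load_add (h : Exchange M M' S a b) (ℓ : Fin p) :
    load M S ℓ + (if b = some ℓ then 1 else 0) = load M' S ℓ + (if a = some ℓ then 1 else 0) := by
  have := congrArg (Multiset.count (some ℓ)) h
  simp only [Multiset.count_cons, count_map_val] at this
  simpa only [eq_comm (a := some ℓ)] using this

theorem load_le_succ (h : Exchange M M' S a b) (ℓ : Fin p) : load M' S ℓ ≤ load M S ℓ + 1 := by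
  have := h.load_add ℓ
  split_ifs at this <;> omega

theorem eq_some_of_load_lt (h : Exchange M M' S a b) {ℓ : Fin p}
    (hlt : load M S ℓ < load M' S ℓ) : b = some ℓ := by
  have := h.load_add ℓ
  split_ifs at this with hb
  · exact hb
  all_goals omega

theorem load_eq_of_self (h : Exchange M M' S a a) (ℓ : Fin p) : load M S ℓ = load M' S ℓ := by
  have := h.load_add ℓ
  omega

theorem insert_of_eq (h : Exchange M M' S a b) (hx : x ∉ S) (hxx : M x = M' x) :
    Exchange M M' (insert x S) a b := by
  unfold Exchange at *
  rw [insert_val_of_notMem hx, Multiset.map_cons, Multiset.map_cons, Multiset.cons_swap, h, hxx,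
    Multiset.cons_swap]

theorem insert_of_eq_right (h : Exchange M M' S a b) (hx : x ∉ S) (hb : M x = b) :
    Exchange M M' (insert x S) a (M' x) := by
  unfold Exchange at *
  rw [insert_val_of_notMem hx, Multiset.map_cons, Multiset.map_cons, hb, h, Multiset.cons_swap]

theorem insert_of_eq_left (h : Exchange M M' S a b) (hx : x ∉ S) (ha : M' x = a) :
    Exchange M M' (insert x S) (M x) b :=
  (h.symm.insert_of_eq_right hx ha).symm

theorem insert_of_self (h : Exchange M M' S a a) (hx : x ∉ S) :
    Exchange M M' (insert x S) (M x) (M' x) := by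
  unfold Exchange at *
  rw [insert_val_of_notMem hx, Multiset.map_cons, Multiset.map_cons,
    (Multiset.cons_inj_right a).1 h, Multiset.cons_swap]

end Exchange

section TwoInstances

variable {uhat : Fin n → ℝ} {k : Fin p → ℕ} {σ σ' : Fin n → Equiv.Perm (Fin p)}
  {M M' : Fin n → Option (Fin p)} {istar : Fin n} {a b : Option (Fin p)} {y : Fin n}

theorem Exchange.eq_some_of_prefers (huhat : Injective uhat) (hM : IsStable uhat σ k M)
    (hM' : IsStable uhat σ' k M') (hex : Exchange M M' (above uhat y) a b) {w : Fin p}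
    (hy : M y = some w) (hpref : Prefers (σ' y) w (M' y)) :
    b = some w ∧ k w ≤ load M' (above uhat y) w := by
  have hfull := hM'.le_load huhat hpref
  exact ⟨hex.eq_some_of_load_lt ((hM.load_lt hy).trans_le hfull), hfull⟩

theorem Exchange.diverge_cases (huhat : Injective uhat) (hM : IsStable uhat σ k M)
    (hM' : IsStable uhat σ' k M') (hσ : σ y = σ' y) (hex : Exchange M M' (above uhat y) a b) :
    M y = M' y ∨ (∃ w, M y = some w ∧ b = some w ∧ k w ≤ load M' (above uhat y) w) ∨
      (∃ w, M' y = some w ∧ a = some w ∧ k w ≤ load M (above uhat y) w) := by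
  by_cases heq : M y = M' y
  · exact Or.inl heq
  obtain ⟨w, ⟨hw, hpref⟩ | ⟨hw, hpref⟩⟩ := exists_prefers_of_ne (σ y) heq
  · rw [hσ] at hpref
    exact Or.inr (Or.inl ⟨w, hw, hex.eq_some_of_prefers huhat hM hM' hw hpref⟩)
  · exact Or.inr (Or.inr ⟨w, hw, hex.symm.eq_some_of_prefers huhat hM' hM hw hpref⟩)

theorem Exchange.apply_eq_of_self (huhat : Injective uhat) (hM : IsStable uhat σ k M)
    (hM' : IsStable uhat σ' k M') (hσ : σ y = σ' y) (hex : Exchange M M' (above uhat y) a a) :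
    M y = M' y := by
  rcases hex.diverge_cases huhat hM hM' hσ with h | ⟨w, hw, -, hfull⟩ | ⟨w, hw, -, hfull⟩
  · exact h
  · have := hM.load_lt hw
    have := hex.load_eq_of_self w
    omega
  · have := hM'.load_lt hw
    have := hex.load_eq_of_self w
    omega

theorem exists_exchange (huhat : Injective uhat) (hagree : ∀ i, i ≠ istar → σ i = σ' i)
    (hM : IsStable uhat σ k M) (hM' : IsStable uhat σ' k M') (i : Fin n) :
    ∃ a b, Exchange M M' (above uhat i) a b ∧ (istar ∉ above uhat i → a = b) := by
  refine above_induction huhat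
    (P := fun S => ∃ a b, Exchange M M' S a b ∧ (istar ∉ S → a = b))
    ⟨none, none, rfl, fun _ => rfl⟩ (fun j ⟨a, b, hex, hab⟩ => ?_) i
  have hj := notMem_above_self (uhat := uhat) j
  by_cases hjs : j = istar
  · subst hjs
    obtain rfl := hab hj
    exact ⟨_, _, hex.insert_of_self hj, fun h => absurd (mem_insert_self _ _) h⟩
  by_cases hs : istar ∈ above uhat j
  · have hs' : istar ∈ insert j (above uhat j) := mem_insert_of_mem hs
    rcases hex.diverge_cases huhat hM hM' (hagree j hjs) with h | ⟨w, hw, rfl, -⟩ | ⟨w, hw, rfl, -⟩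
    · exact ⟨a, _, hex.insert_of_eq hj h, fun h => absurd hs' h⟩
    · exact ⟨a, _, hex.insert_of_eq_right hj hw, fun h => absurd hs' h⟩
    · exact ⟨_, _, hex.insert_of_eq_left hj hw, fun h => absurd hs' h⟩
  · obtain rfl := hab hs
    exact ⟨a, a, hex.insert_of_eq hj (hex.apply_eq_of_self huhat hM hM' (hagree j hjs)), fun _ => rfl⟩

theorem lt_istar_of_ne (huhat : Injective uhat) (hagree : ∀ i, i ≠ istar → σ i = σ' i)
    (hM : IsStable uhat σ k M) (hM' : IsStable uhat σ' k M') {i : Fin n} (hi : i ≠ istar)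
    (hne : M i ≠ M' i) : uhat i < uhat istar := by
  obtain ⟨a, b, hex, hab⟩ := exists_exchange huhat hagree hM hM' i
  by_contra h
  obtain rfl := hab (by simpa [above] using h)
  exact hne (hex.apply_eq_of_self huhat hM hM' (hagree i hi))

theorem exists_full_of_ne (huhat : Injective uhat) (hM : IsStable uhat σ k M)
    (hM' : IsStable uhat σ' k M') (hσ : σ y = σ' y) (hex : Exchange M M' (above uhat y) a b)
    (hne : M y ≠ M' y) :
    ∃ w, (M y = some w ∨ M' y = some w) ∧ k w ≤ load M (insert y (above uhat y)) w ∧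
      k w ≤ load M' (insert y (above uhat y)) w := by
  have hy := notMem_above_self (uhat := uhat) y
  rcases hex.diverge_cases huhat hM hM' hσ with h | ⟨w, hw, rfl, hfull⟩ | ⟨w, hw, rfl, hfull⟩
  · exact absurd h hne
  · refine ⟨w, Or.inl hw, ?_, hfull.trans (load_mono (subset_insert _ _))⟩
    have := hex.load_le_succ w
    rw [load_insert hy, if_pos hw]
    omega
  · refine ⟨w, Or.inr hw, hfull.trans (load_mono (subset_insert _ _)), ?_⟩
    have := hex.symm.load_le_succ w
    rw [load_insert hy, if_pos hw]
    omega

theorem card_erase_filter_ne_le (huhat : Injective uhat)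
    (hagree : ∀ i, i ≠ istar → σ i = σ' i) (hM : IsStable uhat σ k M)
    (hM' : IsStable uhat σ' k M') : ((univ.filter fun i => M i ≠ M' i).erase istar).card ≤ p := by
  set E := (univ.filter fun i => M i ≠ M' i).erase istar
  have hE : ∀ x ∈ E, x ≠ istar ∧ M x ≠ M' x := by simp [E]
  have key : ∀ x : E, ∃ w, (M x = some w ∨ M' x = some w) ∧
      k w ≤ load M (insert x.1 (above uhat x)) w ∧ k w ≤ load M' (insert x.1 (above uhat x)) w := by
    rintro ⟨x, hx⟩
    obtain ⟨a, b, hex, -⟩ := exists_exchange huhat hagree hM hM' x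
    exact exists_full_of_ne huhat hM hM' (hagree x (hE x hx).1) hex (hE x hx).2
  choose f hf using key
  have hlt : ∀ x y : E, uhat y < uhat x → f x ≠ f y := by
    intro x y hxy hfxy
    obtain ⟨-, hfM, hfM'⟩ := hf x
    obtain ⟨hy, -⟩ := hf y
    have hsub := insert_above_subset_above hxy
    rw [hfxy] at hfM hfM'
    rcases hy with hy | hy
    · exact absurd (hfM.trans (load_mono hsub)) (not_le.2 (hM.load_lt hy))
    · exact absurd (hfM'.trans (load_mono hsub)) (not_le.2 (hM'.load_lt hy))
  have hinj : Injective f := by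
    intro x y hxy
    by_contra hne
    rcases lt_or_gt_of_ne (huhat.ne (Subtype.coe_injective.ne hne)) with h | h
    · exact hlt y x h hxy.symm
    · exact hlt x y h hxy
  simpa using Fintype.card_le_of_injective f hinj

def SurplusOrFull (k : Fin p → ℕ) (M M' : Fin n → Option (Fin p)) (S : Finset (Fin n))
    (ℓ : Fin p) : Prop :=
  (∃ b, Exchange M M' S (some ℓ) b) ∨ k ℓ ≤ load M S ℓ

theorem surplusOrFull_insert_of_assigned (huhat : Injective uhat) (hM : IsStable uhat σ k M)
    (hM' : IsStable uhat σ' k M') (hσ : σ y = σ' y) (hex : Exchange M M' (above uhat y) a b)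
    {ℓ : Fin p} (hy : M y = some ℓ) (hy' : M' y ≠ some ℓ) :
    SurplusOrFull k M M' (insert y (above uhat y)) ℓ := by
  have hyS := notMem_above_self (uhat := uhat) y
  rcases hex.diverge_cases huhat hM hM' hσ with h | ⟨w, hw, rfl, hfull⟩ | ⟨w, hw, rfl, -⟩
  · exact absurd (h ▸ hy) hy'
  · obtain rfl : ℓ = w := Option.some.inj (hy.symm.trans hw)
    right
    have := hex.load_le_succ ℓ
    rw [load_insert hyS, if_pos hy]
    omega
  · exact Or.inl ⟨b, hy ▸ hex.insert_of_eq_left hyS hw⟩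

theorem SurplusOrFull.insert (huhat : Injective uhat) (hM : IsStable uhat σ k M)
    (hM' : IsStable uhat σ' k M') (hσ : σ y = σ' y) {ℓ : Fin p}
    (h : SurplusOrFull k M M' (above uhat y) ℓ) :
    SurplusOrFull k M M' (insert y (above uhat y)) ℓ := by
  have hyS := notMem_above_self (uhat := uhat) y
  rcases h with ⟨b, hex⟩ | hfull
  · rcases hex.diverge_cases huhat hM hM' hσ with h | ⟨w, hw, rfl, -⟩ | ⟨w, -, hw, hfull⟩
    · exact Or.inl ⟨b, hex.insert_of_eq hyS h⟩
    · exact Or.inl ⟨_, hex.insert_of_eq_right hyS hw⟩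
    · obtain rfl := Option.some.inj hw
      exact Or.inr (hfull.trans (load_mono (subset_insert _ _)))
  · exact Or.inr (hfull.trans (load_mono (subset_insert _ _)))

theorem SurplusOrFull.eq_some_of_eq_some (huhat : Injective uhat) (hM : IsStable uhat σ k M)
    (hM' : IsStable uhat σ' k M') (hσ : σ y = σ' y) {ℓ : Fin p}
    (h : SurplusOrFull k M M' (above uhat y) ℓ) (hy : M y = some ℓ) : M' y = some ℓ := by
  have hlt := hM.load_lt hy
  rcases h with ⟨b, hex⟩ | hfull
  · rcases hex.diverge_cases huhat hM hM' hσ with h | ⟨w, hw, rfl, hfull⟩ | ⟨w, hw, hw', -⟩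
    · exact h ▸ hy
    · obtain rfl : ℓ = w := Option.some.inj (hy.symm.trans hw)
      have := hex.load_eq_of_self ℓ
      omega
    · exact hw.trans hw'.symm
  · omega

theorem surplusOrFull_above (huhat : Injective uhat) (hagree : ∀ i, i ≠ istar → σ i = σ' i)
    (hM : IsStable uhat σ k M) (hM' : IsStable uhat σ' k M') {i₁ : Fin n} (hi₁ : i₁ ≠ istar)
    {ℓ : Fin p} (h₁ : M i₁ = some ℓ) (h₁' : M' i₁ ≠ some ℓ) {i : Fin n} (hi : uhat i < uhat i₁) :
    SurplusOrFull k M M' (above uhat i) ℓ := by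
  have hstar := lt_istar_of_ne huhat hagree hM hM' hi₁ fun h => h₁' (h ▸ h₁)
  refine above_induction huhat (P := fun S => i₁ ∈ S → SurplusOrFull k M M' S ℓ)
    (fun h => absurd h (notMem_empty _)) (fun j ih hj => ?_) i (by simpa [above] using hi)
  rcases mem_insert.1 hj with rfl | hj
  · obtain ⟨a, b, hex, -⟩ := exists_exchange huhat hagree hM hM' i₁
    exact surplusOrFull_insert_of_assigned huhat hM hM' (hagree i₁ hi₁) hex h₁ h₁'
  · have hjs : j ≠ istar := by
      rintro rfl
      simp only [above, mem_filter, mem_univ, true_and] at hj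
      exact lt_asymm hj hstar
    exact (ih hj).insert huhat hM hM' (hagree j hjs)

theorem card_sdiff_erase_le_one (huhat : Injective uhat)
    (hagree : ∀ i, i ≠ istar → σ i = σ' i) (hM : IsStable uhat σ k M)
    (hM' : IsStable uhat σ' k M') (ℓ : Fin p) :
    ((assignedTo M ℓ \ assignedTo M' ℓ).erase istar).card ≤ 1 := by
  have hmem : ∀ x ∈ (assignedTo M ℓ \ assignedTo M' ℓ).erase istar,
      x ≠ istar ∧ M x = some ℓ ∧ M' x ≠ some ℓ := by
    simp [assignedTo]
  have hlt : ∀ x ∈ (assignedTo M ℓ \ assignedTo M' ℓ).erase istar,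
      ∀ y ∈ (assignedTo M ℓ \ assignedTo M' ℓ).erase istar, ¬ uhat y < uhat x := by
    intro x hx y hy hxy
    obtain ⟨hxs, hxM, hxM'⟩ := hmem x hx
    obtain ⟨hys, hyM, hyM'⟩ := hmem y hy
    exact hyM' ((surplusOrFull_above huhat hagree hM hM' hxs hxM hxM' hxy).eq_some_of_eq_some
      huhat hM hM' (hagree y hys) hyM)
  refine card_le_one.2 fun x hx y hy => ?_
  by_contra hne
  rcases lt_or_gt_of_ne (huhat.ne hne) with h | h
  · exact hlt y hy x hx h
  · exact hlt x hx y hy h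

end TwoInstances

end Selection

theorem stable_lipschitz_in_one_preference_general
    (n p : ℕ)
    (uhat : Fin n → ℝ) (huhat : Function.Injective uhat)
    (k : Fin p → ℕ)
    (σ σ' : Fin n → Equiv.Perm (Fin p)) (istar : Fin n)
    (hagree : ∀ i, i ≠ istar → σ i = σ' i)
    (M M' : Fin n → Option (Fin p))
    (hM : IsStable uhat σ k M) (hM' : IsStable uhat σ' k M') :
    (Finset.univ.filter fun i => M i ≠ M' i).card ≤ p + 1 ∧
      ∀ ℓ : Fin p,
        ((assignedTo M ℓ \ assignedTo M' ℓ).erase istar).card ≤ 1 ∧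
        ((assignedTo M' ℓ \ assignedTo M ℓ).erase istar).card ≤ 1 := by
  refine ⟨?_, fun ℓ => ⟨Selection.card_sdiff_erase_le_one huhat hagree hM hM' ℓ,
    Selection.card_sdiff_erase_le_one huhat (fun i hi => (hagree i hi).symm) hM' hM ℓ⟩⟩
  have hbound := Selection.card_erase_filter_ne_le huhat hagree hM hM'
  have herase := pred_card_le_card_erase (s := univ.filter fun i => M i ≠ M' i) (a := istar)
  omega

/-- If two instances share the utilities and capacities and their
preference profiles agree except possibly at one candidate `istar`, then the stable
assignments differ on at most `p + 1` candidates; moreover for every institution `ℓ`,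
at most one candidate other than `istar` is assigned to `ℓ` by `M` but not `M'`, and
at most one candidate other than `istar` is assigned to `ℓ` by `M'` but not `M`. -/
theorem stable_lipschitz_in_one_preference
    (n p : ℕ) (hp : 1 ≤ p)
    (uhat : Fin n → ℝ) (huhat : Function.Injective uhat)
    (k : Fin p → ℕ)
    (σ σ' : Fin n → Equiv.Perm (Fin p)) (istar : Fin n)
    (hagree : ∀ i, i ≠ istar → σ i = σ' i)
    (M M' : Fin n → Option (Fin p))
    (hM : IsStable uhat σ k M) (hM' : IsStable uhat σ' k M') :
    (Finset.univ.filter fun i => M i ≠ M' i).card ≤ p + 1 ∧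
      ∀ ℓ : Fin p,
        ((assignedTo M ℓ \ assignedTo M' ℓ).erase istar).card ≤ 1 ∧
        ((assignedTo M' ℓ \ assignedTo M ℓ).erase istar).card ≤ 1 :=
  stable_lipschitz_in_one_preference_general n p uhat huhat k σ σ' istar hagree M M' hM hM'
end

section
/- Let two instances of the selection setting have the same n distinct observed utilities and the same preference profile, and capacities that agree on all institutions except one institution ℓ*, whose capacity is k_{ℓ*} in the first instance and k_{ℓ*}+1 in the second. Let M and M' be the unique stable assignments of the two instances. Then the number of candidates i with M(i) ≠ M'(i) is at most p; moreover, for every institution ℓ, at most one candidate is assigned to ℓ by M but not by M', and at most one candidate is assigned to ℓ by M' but not by M. -/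
open MeasureTheory Finset

/-!
With a common priority order (the observed utilities), the stable assignment is the outcome of
serial dictatorship: going down the utility order, each candidate takes their favourite
institution among those with a seat left by the candidates above them. Run both dictatorships
side by side. The extra seat at `ℓ*` travels as a vacancy: whoever takes it in the second
instance takes a different seat in the first, which thereby stays free there and becomes the
new vacancy, while the seat just taken is full in both instances from then on. So the
candidates on which the two assignments differ form a chain on which both `M` and `M'` are
injective and `M'` is never unassigned; this bounds their number by `p` and leaves at most one
of them per institution on each side.
-/

section

variable {n p : ℕ}

def load (M : Fin n → Option (Fin p)) (S : Finset (Fin n)) (ℓ : Fin p) : ℕ :=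
  #{i ∈ S | M i = some ℓ}

def vacant (M : Fin n → Option (Fin p)) (k : Fin p → ℕ) (S : Finset (Fin n)) : Finset (Fin p) :=
  {ℓ | load M S ℓ < k ℓ}

noncomputable def higher (uhat : Fin n → ℝ) (i : Fin n) : Finset (Fin n) :=
  {i' | uhat i < uhat i'}

def disagree (M M' : Fin n → Option (Fin p)) (S : Finset (Fin n)) : Finset (Fin n) :=
  {i ∈ S | M i ≠ M' i}

def IsTopChoice (σi : Equiv.Perm (Fin p)) (A : Finset (Fin p)) : Option (Fin p) → Prop
  | none => A = ∅
  | some j => j ∈ A ∧ ∀ j' ∈ A, σi j ≤ σi j'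

lemma load_insert (M : Fin n → Option (Fin p)) {S : Finset (Fin n)} {i : Fin n} (hi : i ∉ S)
    (ℓ : Fin p) : load M (insert i S) ℓ = load M S ℓ + if M i = some ℓ then 1 else 0 := by
  unfold load
  rw [filter_insert]
  split_ifs <;> simp [hi]

lemma load_mono (M : Fin n → Option (Fin p)) {S T : Finset (Fin n)} (h : S ⊆ T) (ℓ : Fin p) :
    load M S ℓ ≤ load M T ℓ :=
  card_le_card (filter_subset_filter _ h)

lemma mem_vacant {M : Fin n → Option (Fin p)} {k : Fin p → ℕ} {S : Finset (Fin n)} {ℓ : Fin p} :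
    ℓ ∈ vacant M k S ↔ load M S ℓ < k ℓ := by
  simp [vacant]

lemma vacant_anti {M : Fin n → Option (Fin p)} {k : Fin p → ℕ} {S T : Finset (Fin n)}
    (h : S ⊆ T) : vacant M k T ⊆ vacant M k S := fun ℓ hℓ =>
  mem_vacant.2 ((load_mono M h ℓ).trans_lt (mem_vacant.1 hℓ))

lemma mem_higher {uhat : Fin n → ℝ} {i i' : Fin n} : i' ∈ higher uhat i ↔ uhat i < uhat i' := by
  simp [higher]

lemma notMem_higher_self (uhat : Fin n → ℝ) (i : Fin n) : i ∉ higher uhat i := by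
  simp [higher]

lemma disagree_comm (M M' : Fin n → Option (Fin p)) (S : Finset (Fin n)) :
    disagree M M' S = disagree M' M S :=
  filter_congr fun _ _ => ne_comm

lemma disagree_insert_of_eq {M M' : Fin n → Option (Fin p)} {S : Finset (Fin n)} {i : Fin n}
    (h : M i = M' i) : disagree M M' (insert i S) = disagree M M' S := by
  simp [disagree, filter_insert, h]

lemma disagree_insert_of_ne {M M' : Fin n → Option (Fin p)} {S : Finset (Fin n)} {i : Fin n}
    (h : M i ≠ M' i) : disagree M M' (insert i S) = insert i (disagree M M' S) := by
  simp [disagree, filter_insert, h]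

lemma card_assignedTo_sdiff_le_one {M N : Fin n → Option (Fin p)}
    (h : Set.InjOn M (disagree M N univ)) (ℓ : Fin p) :
    #(assignedTo M ℓ \ assignedTo N ℓ) ≤ 1 := by
  simp only [card_le_one, assignedTo, mem_sdiff, mem_filter, mem_univ, true_and]
  intro a ⟨ha, ha'⟩ b ⟨hb, hb'⟩
  refine h ?_ ?_ (ha.trans hb.symm) <;> simp [disagree, *, eq_comm]

lemma IsTopChoice.exists_mem_sdiff_of_ne {σi : Equiv.Perm (Fin p)} {A A' : Finset (Fin p)}
    {o o' : Option (Fin p)} (hA : A ⊆ A') (ho : IsTopChoice σi A o)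
    (ho' : IsTopChoice σi A' o') (hne : o ≠ o') : ∃ ℓ ∈ A' \ A, o' = some ℓ := by
  rcases o with _ | j <;> rcases o' with _ | ℓ
  · exact absurd rfl hne
  · exact ⟨ℓ, mem_sdiff.2 ⟨ho'.1, ho ▸ notMem_empty ℓ⟩, rfl⟩
  · exact absurd (hA ho.1) (ho' ▸ notMem_empty j)
  · refine ⟨ℓ, mem_sdiff.2 ⟨ho'.1, fun hℓ => hne ?_⟩, rfl⟩
    rw [(σi.injective (le_antisymm (ho.2 ℓ hℓ) (ho'.2 j (hA ho.1))))]

end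

section Stable

variable {n p : ℕ} {uhat : Fin n → ℝ} {σ : Fin n → Equiv.Perm (Fin p)} {k : Fin p → ℕ}
  {M : Fin n → Option (Fin p)}

lemma IsStable.mem_vacant_of_eq_some (hM : IsStable uhat σ k M) {i : Fin n} {j : Fin p}
    (h : M i = some j) : j ∈ vacant M k (higher uhat i) := by
  have hload := load_mono M (subset_univ (insert i (higher uhat i))) j
  rw [load_insert M (notMem_higher_self uhat i), if_pos h] at hload
  exact mem_vacant.2 (Nat.lt_of_succ_le (hload.trans (hM.1 j)))

lemma IsStable.not_prefers_of_mem_vacant (huhat : Function.Injective uhat)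
    (hM : IsStable uhat σ k M) {i : Fin n} {j : Fin p} (hj : j ∈ vacant M k (higher uhat i))
    (hne : M i ≠ some j) : ¬ Prefers (σ i) j (M i) := by
  intro hpref
  refine hM.2 i j ⟨hne, hpref, ?_⟩
  by_cases hsub : assignedTo M j ⊆ higher uhat i
  · left
    calc #(assignedTo M j) ≤ load M (higher uhat i) j :=
          card_le_card fun x hx => mem_filter.2 ⟨hsub hx, (mem_filter.1 hx).2⟩
      _ < k j := mem_vacant.1 hj
  · right
    obtain ⟨i', hi', hi'_low⟩ := not_subset.1 hsub
    have hi'i : i' ≠ i := by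
      rintro rfl
      exact hne (mem_filter.1 hi').2
    exact ⟨i', hi', lt_of_le_of_ne (not_lt.1 (mt mem_higher.2 hi'_low)) (huhat.ne hi'i)⟩

lemma IsStable.isTopChoice (huhat : Function.Injective uhat) (hM : IsStable uhat σ k M)
    (i : Fin n) : IsTopChoice (σ i) (vacant M k (higher uhat i)) (M i) := by
  cases h : M i with
  | none =>
    exact eq_empty_of_forall_notMem fun j hj =>
      hM.not_prefers_of_mem_vacant huhat hj (by simp [h]) (by simp [h, Prefers])
  | some j =>
    refine ⟨hM.mem_vacant_of_eq_some h, fun j' hj' => not_lt.1 fun hlt => ?_⟩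
    refine hM.not_prefers_of_mem_vacant huhat hj' ?_ (by rw [h]; exact hlt)
    rw [h]
    rintro ⟨⟩
    exact lt_irrefl _ hlt

end Stable

section VacancyChain

variable {n p : ℕ} {M M' : Fin n → Option (Fin p)} {k k' : Fin p → ℕ} {lstar : Fin p}
  {S : Finset (Fin n)} {v : Option (Fin p)} {i : Fin n}

/-- The state after the candidates in `S` have chosen: `v` is the institution holding the seat
that `M'` has in excess of `M` (`none` once a candidate unassigned by `M` has taken it), and the
candidates on which `M` and `M'` disagree are the links of the vacancy chain from `lstar` to `v`,
each of them taking under `M'` the seat vacated by the previous one. -/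
structure IsVacancyChain (M M' : Fin n → Option (Fin p)) (k : Fin p → ℕ) (lstar : Fin p)
    (S : Finset (Fin n)) (v : Option (Fin p)) : Prop where
  load_add_eq : ∀ ℓ, load M' S ℓ + (if v = some ℓ then 1 else 0) =
    load M S ℓ + (if ℓ = lstar then 1 else 0)
  ne_vacancy : ∀ x ∈ disagree M M' S, M' x ≠ v
  exists_full : ∀ x ∈ disagree M M' S, ∃ ℓ ∉ vacant M k S, M' x = some ℓ
  mem_chain : ∀ x ∈ disagree M M' S, M x = v ∨ ∃ x' ∈ disagree M M' S, M x = M' x'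
  injOn_right : Set.InjOn M' (disagree M M' S)
  injOn_left : Set.InjOn M (disagree M M' S)

lemma isVacancyChain_empty : IsVacancyChain M M' k lstar ∅ (some lstar) where
  load_add_eq ℓ := by simp [load, eq_comm]
  ne_vacancy := by simp [disagree]
  exists_full := by simp [disagree]
  mem_chain := by simp [disagree]
  injOn_right := by simp [disagree]
  injOn_left := by simp [disagree]

namespace IsVacancyChain

lemma vacant_subset (h : IsVacancyChain M M' k lstar S v)
    (hk' : ∀ ℓ, k' ℓ = k ℓ + if ℓ = lstar then 1 else 0) : vacant M k S ⊆ vacant M' k' S := by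
  intro ℓ hℓ
  rw [mem_vacant] at hℓ ⊢
  have hadd := h.load_add_eq ℓ
  have hcap := hk' ℓ
  split_ifs at hadd hcap <;> omega

lemma eq_some_of_mem_sdiff (h : IsVacancyChain M M' k lstar S v)
    (hk' : ∀ ℓ, k' ℓ = k ℓ + if ℓ = lstar then 1 else 0) {ℓ : Fin p}
    (hℓ : ℓ ∈ vacant M' k' S \ vacant M k S) : v = some ℓ := by
  by_contra hv
  rw [mem_sdiff, mem_vacant, mem_vacant] at hℓ
  have hadd := h.load_add_eq ℓ
  have hcap := hk' ℓ
  rw [if_neg hv] at hadd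
  split_ifs at hadd hcap <;> omega

lemma insert_of_eq (h : IsVacancyChain M M' k lstar S v) (hi : i ∉ S)
    (heq : M i = M' i) : IsVacancyChain M M' k lstar (insert i S) v := by
  have hD := disagree_insert_of_eq (S := S) heq
  refine ⟨fun ℓ => ?_, hD ▸ h.ne_vacancy, ?_, hD ▸ h.mem_chain, hD ▸ h.injOn_right,
    hD ▸ h.injOn_left⟩
  · rw [load_insert M hi, load_insert M' hi, ← heq]
    have := h.load_add_eq ℓ
    omega
  · rw [hD]
    intro x hx
    obtain ⟨ℓ, hℓ, hx⟩ := h.exists_full x hx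
    exact ⟨ℓ, fun hℓ' => hℓ (vacant_anti (subset_insert i S) hℓ'), hx⟩

lemma insert_of_ne (h : IsVacancyChain M M' k lstar S v) (hi : i ∉ S)
    (hne : M i ≠ M' i) (hv : M' i = v) (hfull : ∃ ℓ ∉ vacant M k S, M' i = some ℓ)
    (hMi : ∀ j, M i = some j → j ∈ vacant M k S) :
    IsVacancyChain M M' k lstar (insert i S) (M i) := by
  have hD := disagree_insert_of_ne (S := S) hne
  have hiD : i ∉ disagree M M' S := fun hiD => hi (mem_filter.1 hiD).1
  have hfresh : ∀ x ∈ disagree M M' S, M' x ≠ M i := by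
    intro x hx hx'
    obtain ⟨ℓ, hℓ, hxℓ⟩ := h.exists_full x hx
    exact hℓ (hMi ℓ (hx'.symm.trans hxℓ))
  have hstays_full : ∀ ℓ ∉ vacant M k S, ℓ ∉ vacant M k (insert i S) :=
    fun ℓ hℓ hℓ' => hℓ (vacant_anti (subset_insert i S) hℓ')
  refine ⟨fun ℓ => ?_, ?_, ?_, ?_, ?_, ?_⟩
  · rw [load_insert M hi, load_insert M' hi, hv]
    have := h.load_add_eq ℓ
    omega
  · rw [hD, forall_mem_insert]
    exact ⟨Ne.symm hne, hfresh⟩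
  · rw [hD, forall_mem_insert]
    refine ⟨?_, fun x hx => ?_⟩
    · obtain ⟨ℓ, hℓ, hiℓ⟩ := hfull
      exact ⟨ℓ, hstays_full ℓ hℓ, hiℓ⟩
    · obtain ⟨ℓ, hℓ, hxℓ⟩ := h.exists_full x hx
      exact ⟨ℓ, hstays_full ℓ hℓ, hxℓ⟩
  · rw [hD, forall_mem_insert]
    refine ⟨Or.inl rfl, fun x hx => Or.inr ?_⟩
    rcases h.mem_chain x hx with hxv | ⟨x', hx', hxx'⟩
    · exact ⟨i, mem_insert_self i _, hxv.trans hv.symm⟩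
    · exact ⟨x', mem_insert_of_mem hx', hxx'⟩
  · rw [hD, coe_insert, Set.injOn_insert hiD]
    refine ⟨h.injOn_right, ?_⟩
    rintro ⟨x, hx, hxi⟩
    exact h.ne_vacancy x hx (hxi.trans hv)
  · rw [hD, coe_insert, Set.injOn_insert hiD]
    refine ⟨h.injOn_left, ?_⟩
    rintro ⟨x, hx, hxi⟩
    rcases h.mem_chain x hx with hxv | ⟨x', hx', hxx'⟩
    · exact hne (hxi.symm.trans (hxv.trans hv.symm))
    · exact hfresh x' hx' (hxx'.symm.trans hxi)

lemma card_disagree_le (h : IsVacancyChain M M' k lstar S v) :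
    #(disagree M M' S) ≤ p := by
  have hmaps : Set.MapsTo M' (disagree M M' S) (univ.erase none : Finset (Option (Fin p))) := by
    intro x hx
    obtain ⟨ℓ, -, hxℓ⟩ := h.exists_full x hx
    simp [hxℓ]
  simpa using card_le_card_of_injOn M' hmaps h.injOn_right

lemma exists_insert {uhat : Fin n → ℝ} {σ : Fin n → Equiv.Perm (Fin p)}
    (huhat : Function.Injective uhat)
    (hM : IsStable uhat σ k M) (hM' : IsStable uhat σ k' M')
    (hk' : ∀ ℓ, k' ℓ = k ℓ + if ℓ = lstar then 1 else 0)
    (h : IsVacancyChain M M' k lstar (higher uhat i) v) :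
    ∃ v', IsVacancyChain M M' k lstar (insert i (higher uhat i)) v' := by
  have hi := notMem_higher_self uhat i
  by_cases heq : M i = M' i
  · exact ⟨v, h.insert_of_eq hi heq⟩
  obtain ⟨ℓ, hℓ, hM'i⟩ := (hM.isTopChoice huhat i).exists_mem_sdiff_of_ne
    (h.vacant_subset hk') (hM'.isTopChoice huhat i) heq
  exact ⟨M i, h.insert_of_ne hi heq (hM'i.trans (h.eq_some_of_mem_sdiff hk' hℓ).symm)
    ⟨ℓ, (mem_sdiff.1 hℓ).2, hM'i⟩ fun j hj => hM.mem_vacant_of_eq_some hj⟩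

end IsVacancyChain

lemma exists_isVacancyChain_univ {uhat : Fin n → ℝ} {σ : Fin n → Equiv.Perm (Fin p)}
    (huhat : Function.Injective uhat)
    (hM : IsStable uhat σ k M) (hM' : IsStable uhat σ k' M')
    (hk' : ∀ ℓ, k' ℓ = k ℓ + if ℓ = lstar then 1 else 0) :
    ∃ v, IsVacancyChain M M' k lstar univ v := by
  refine induction_on_min_value uhat
    (motive := fun s => (∀ x ∈ s, ∀ y, uhat x < uhat y → y ∈ s) →
      ∃ v, IsVacancyChain M M' k lstar s v)
    univ (fun _ => ⟨_, isVacancyChain_empty⟩) ?_ (fun _ _ y _ => mem_univ y)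
  intro a s ha hmin ih hup
  have hs : s = higher uhat a := by
    ext x
    rw [mem_higher]
    constructor
    · intro hx
      exact lt_of_le_of_ne (hmin x hx) (huhat.ne fun hax => ha (hax ▸ hx))
    · intro hax
      exact (mem_insert.1 (hup a (mem_insert_self a s) x hax)).resolve_left
        fun hxa => (hxa ▸ hax).false
  subst hs
  obtain ⟨v, hv⟩ := ih fun x hx y hxy => mem_higher.2 ((mem_higher.1 hx).trans hxy)
  exact hv.exists_insert huhat hM hM' hk'

end VacancyChain

theorem stable_lipschitz_in_one_capacity_general
    (n p : ℕ)
    (uhat : Fin n → ℝ) (huhat : Function.Injective uhat)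
    (σ : Fin n → Equiv.Perm (Fin p))
    (k k' : Fin p → ℕ) (lstar : Fin p)
    (hagree : ∀ ℓ, ℓ ≠ lstar → k' ℓ = k ℓ) (hstar : k' lstar = k lstar + 1)
    (M M' : Fin n → Option (Fin p))
    (hM : IsStable uhat σ k M) (hM' : IsStable uhat σ k' M') :
    (Finset.univ.filter fun i => M i ≠ M' i).card ≤ p ∧
      ∀ ℓ : Fin p,
        (assignedTo M ℓ \ assignedTo M' ℓ).card ≤ 1 ∧
        (assignedTo M' ℓ \ assignedTo M ℓ).card ≤ 1 := by
  have hk' : ∀ ℓ, k' ℓ = k ℓ + if ℓ = lstar then 1 else 0 := by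
    intro ℓ
    split_ifs with hℓ
    · exact hℓ ▸ hstar
    · exact hagree ℓ hℓ
  obtain ⟨v, hv⟩ := exists_isVacancyChain_univ huhat hM hM' hk'
  refine ⟨hv.card_disagree_le, fun ℓ => ⟨card_assignedTo_sdiff_le_one hv.injOn_left ℓ, ?_⟩⟩
  exact card_assignedTo_sdiff_le_one (disagree_comm M M' univ ▸ hv.injOn_right) ℓ

/-- If two instances share the utilities and preferences and their
capacities agree except at one institution `lstar`, whose capacity is one larger in the
second instance, then the stable assignments differ on at most `p` candidates; moreover
for every institution `ℓ`, at most one candidate is assigned to `ℓ` by `M` but not `M'`,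
and at most one candidate is assigned to `ℓ` by `M'` but not `M`. -/
theorem stable_lipschitz_in_one_capacity
    (n p : ℕ) (hp : 1 ≤ p)
    (uhat : Fin n → ℝ) (huhat : Function.Injective uhat)
    (σ : Fin n → Equiv.Perm (Fin p))
    (k k' : Fin p → ℕ) (lstar : Fin p)
    (hagree : ∀ ℓ, ℓ ≠ lstar → k' ℓ = k ℓ) (hstar : k' lstar = k lstar + 1)
    (M M' : Fin n → Option (Fin p))
    (hM : IsStable uhat σ k M) (hM' : IsStable uhat σ k' M') :
    (Finset.univ.filter fun i => M i ≠ M' i).card ≤ p ∧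
      ∀ ℓ : Fin p,
        (assignedTo M ℓ \ assignedTo M' ℓ).card ≤ 1 ∧
        (assignedTo M' ℓ \ assignedTo M ℓ).card ≤ 1 :=
  stable_lipschitz_in_one_capacity_general n p uhat huhat σ k k' lstar hagree hstar M M' hM hM'
end

section
/- Let two instances of the selection setting have the same n distinct observed utilities and the same preference profile, with capacity vectors (k_1,…,k_p) and (k'_1,…,k'_p), and set D := Σ_ℓ |k_ℓ − k'_ℓ|. Then the unique stable assignments M and M' of the two instances differ on at most p·D candidates, i.e. |{i : M(i) ≠ M'(i)}| ≤ p·D. -/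
open MeasureTheory Finset

/-!
List the candidates by decreasing observed utility. In a stable assignment every candidate gets
her most preferred institution among those with seats left over by the candidates above her, so
the stable assignment is the outcome of serial dictatorship along that list.

Adding one seat at one institution changes serial dictatorship along a vacancy chain. As long as
both runs make the same choices, the spare seat stays where it is. A candidate who takes the
spare seat at `j` in the larger instance and `m` in the smaller one moves the spare seat to `m`
and leaves `j` full in both runs; one who finds no seat in the smaller instance ends the chain.
So every disagreement uses up an institution with free seats in the larger instance, and at most
`p` candidates are affected.
Going from `k` to `k'` takes `D` such unit steps through `k ⊓ k'`, and the Hamming distance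
satisfies the triangle inequality.
-/

variable {n p : ℕ}

section Hamming

variable {ι : Type*} [Fintype ι] [DecidableEq ι] {β : Type*} [DecidableEq β]

theorem hammingDist_update_le (x y : ι → β) (i : ι) (a b : β) :
    hammingDist (Function.update x i a) (Function.update y i b) ≤ hammingDist x y + 1 := by
  refine (card_le_card fun l hl => ?_).trans (card_insert_le i _)
  by_cases hli : l = i
  · exact hli ▸ mem_insert_self l _
  · simp_all

theorem hammingDist_update_same_le (x y : ι → β) (i : ι) (a : β) :
    hammingDist (Function.update x i a) (Function.update y i a) ≤ hammingDist x y := by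
  refine card_le_card fun l hl => ?_
  by_cases hli : l = i <;> simp_all

theorem hammingDist_add_le_mul_sum {α : Type*} [Fintype α] (F : (ι → ℕ) → α → β) (C : ℕ)
    (hF : ∀ c j, hammingDist (F c) (F (c + Pi.single j 1)) ≤ C) (c δ : ι → ℕ) :
    hammingDist (F c) (F (c + δ)) ≤ C * ∑ ℓ, δ ℓ := by
  induction hN : ∑ ℓ, δ ℓ generalizing δ with
  | zero =>
    obtain rfl : δ = 0 := funext fun ℓ => sum_eq_zero_iff.1 hN ℓ (mem_univ ℓ)
    simp
  | succ N ih =>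
    obtain ⟨j, -, hj⟩ := exists_ne_zero_of_sum_ne_zero (hN.trans_ne N.succ_ne_zero)
    set δ₁ : ι → ℕ := δ - Pi.single j 1
    have hsplit : δ = δ₁ + Pi.single j 1 := by
      ext ℓ
      by_cases hℓ : ℓ = j
      · subst hℓ
        simp only [δ₁, Pi.add_apply, Pi.sub_apply, Pi.single_eq_same]
        omega
      · simp [δ₁, hℓ]
    have hsum : ∑ ℓ, δ₁ ℓ = N := by
      rw [hsplit] at hN
      simpa [sum_add_distrib] using hN
    calc hammingDist (F c) (F (c + δ))
        ≤ hammingDist (F c) (F (c + δ₁)) + hammingDist (F (c + δ₁)) (F (c + δ)) :=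
          hammingDist_triangle _ _ _
      _ ≤ C * N + C := by
        refine add_le_add (ih δ₁ hsum) ?_
        rw [hsplit, ← add_assoc]
        exact hF _ j
      _ = C * (N + 1) := by ring

theorem hammingDist_le_mul_sum_natAbs {α : Type*} [Fintype α] (F : (ι → ℕ) → α → β) (C : ℕ)
    (hF : ∀ c j, hammingDist (F c) (F (c + Pi.single j 1)) ≤ C) (k k' : ι → ℕ) :
    hammingDist (F k) (F k') ≤ C * ∑ ℓ, ((k ℓ : ℤ) - k' ℓ).natAbs := by
  set m : ι → ℕ := k ⊓ k'
  have hk : k = m + (k - m) := by ext ℓ; simp [m]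
  have hk' : k' = m + (k' - m) := by ext ℓ; simp [m]
  calc hammingDist (F k) (F k')
      ≤ hammingDist (F m) (F k) + hammingDist (F m) (F k') := hammingDist_triangle_left _ _ _
    _ ≤ C * ∑ ℓ, (k - m) ℓ + C * ∑ ℓ, (k' - m) ℓ := by
        have hk_le := hammingDist_add_le_mul_sum F C hF m (k - m)
        have hk'_le := hammingDist_add_le_mul_sum F C hF m (k' - m)
        rw [← hk] at hk_le
        rw [← hk'] at hk'_le
        exact add_le_add hk_le hk'_le
    _ = C * ∑ ℓ, ((k ℓ : ℤ) - k' ℓ).natAbs := by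
        rw [← mul_add, ← sum_add_distrib]
        refine congrArg _ (sum_congr rfl fun ℓ _ => ?_)
        simp only [m, Pi.sub_apply, Pi.inf_apply]
        omega

end Hamming

theorem exists_list_pairwise_gt {α β : Type*} [Fintype α] [LinearOrder β] {f : α → β}
    (hf : Function.Injective f) : ∃ L : List α, (∀ x, x ∈ L) ∧ L.Pairwise fun a b => f b < f a := by
  refine ⟨univ.toList.mergeSort fun a b => f b ≤ f a, fun x => by simp, ?_⟩
  have hle := List.pairwise_mergeSort (le := fun a b => f b ≤ f a)
    (fun a b c hab hbc => by simp only [decide_eq_true_eq] at *; exact hbc.trans hab)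
    (fun a b => by simpa using le_total (f b) (f a)) univ.toList
  have hnodup := List.nodup_mergeSort (le := fun a b => f b ≤ f a) |>.2 univ.nodup_toList
  exact (hle.and hnodup).imp fun h => (by simpa using h.1 : f _ ≤ f _).lt_of_ne (hf.ne h.2).symm

section SerialDictatorship

noncomputable def topAvailable (π : Equiv.Perm (Fin p)) (c : Fin p → ℕ) : Option (Fin p) :=
  if h : ∃ ℓ, 0 < c ℓ then some (Function.argminOn π {ℓ | 0 < c ℓ} h) else none

theorem topAvailable_eq_iff {π : Equiv.Perm (Fin p)} {c : Fin p → ℕ} {o : Option (Fin p)} :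
    topAvailable π c = o ↔ (∀ m ∈ o, 0 < c m) ∧ ∀ ℓ, 0 < c ℓ → ¬ Prefers π ℓ o := by
  unfold topAvailable
  split_ifs with h
  · constructor
    · rintro rfl
      exact ⟨fun m hm => Option.some_inj.1 hm ▸ Function.argminOn_mem _ _ h,
        fun ℓ hℓ => Function.not_lt_argminOn π _ hℓ⟩
    · rintro ⟨havail, hbest⟩
      cases o with
      | none => exact absurd trivial (hbest _ h.choose_spec)
      | some m =>
        have hm := havail m rfl
        refine congrArg some (π.injective (le_antisymm (Function.argminOn_le π _ hm) ?_))
        exact not_lt.1 (hbest _ (Function.argminOn_mem _ _ h))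
  · push Not at h
    constructor
    · rintro rfl
      exact ⟨fun m hm => (nomatch hm), fun ℓ hℓ => absurd hℓ (h ℓ).not_gt⟩
    · rintro ⟨havail, -⟩
      cases o with
      | none => rfl
      | some m => exact absurd (havail m rfl) (h m).not_gt

theorem pos_of_topAvailable_eq_some {π : Equiv.Perm (Fin p)} {c : Fin p → ℕ} {m : Fin p}
    (h : topAvailable π c = some m) : 0 < c m :=
  (topAvailable_eq_iff.1 h).1 m rfl

theorem topAvailable_add_single {π : Equiv.Perm (Fin p)} (c : Fin p → ℕ) (j : Fin p) :
    topAvailable π (c + Pi.single j 1) = topAvailable π c ∨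
      c j = 0 ∧ topAvailable π (c + Pi.single j 1) = some j := by
  by_cases hj : c j = 0 ∧ topAvailable π (c + Pi.single j 1) = some j
  · exact Or.inr hj
  refine Or.inl (topAvailable_eq_iff.2 ⟨fun m hm => ?_, fun ℓ hℓ => ?_⟩).symm
  · have := pos_of_topAvailable_eq_some hm
    by_cases hmj : m = j
    · subst hmj
      exact Nat.pos_of_ne_zero fun h0 => hj ⟨h0, hm⟩
    · simpa [hmj] using this
  · exact (topAvailable_eq_iff.1 rfl).2 ℓ (by simp; omega)

def takeSeat (c : Fin p → ℕ) (o : Option (Fin p)) (ℓ : Fin p) : ℕ :=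
  c ℓ - if o = some ℓ then 1 else 0

theorem takeSeat_le (c : Fin p → ℕ) (o : Option (Fin p)) (ℓ : Fin p) : takeSeat c o ℓ ≤ c ℓ :=
  Nat.sub_le _ _

theorem takeSeat_add_single {c : Fin p → ℕ} {o : Option (Fin p)} (ho : ∀ m ∈ o, 0 < c m)
    (j : Fin p) : takeSeat (c + Pi.single j 1) o = takeSeat c o + Pi.single j 1 := by
  funext ℓ
  simp only [takeSeat, Pi.add_apply, Pi.single_apply]
  by_cases hℓ : o = some ℓ
  · have := ho ℓ hℓ
    split_ifs <;> omega
  · simp [hℓ]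

theorem takeSeat_add_single_self (c : Fin p → ℕ) (j : Fin p) :
    takeSeat (c + Pi.single j 1) (some j) = c := by
  funext ℓ
  by_cases hℓ : ℓ = j
  · simp [takeSeat, hℓ]
  · simp [takeSeat, hℓ, Ne.symm hℓ]

theorem takeSeat_some_add_single {c : Fin p → ℕ} {m : Fin p} (hm : 0 < c m) :
    takeSeat c (some m) + Pi.single m 1 = c := by
  funext ℓ
  by_cases hℓ : ℓ = m
  · subst hℓ
    simp [takeSeat]
    omega
  · simp [takeSeat, hℓ, Ne.symm hℓ]

variable (σ : Fin n → Equiv.Perm (Fin p))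

noncomputable def serialDictatorship : List (Fin n) → (Fin p → ℕ) → Fin n → Option (Fin p)
  | [], _ => fun _ => none
  | i :: L, c => Function.update
      (serialDictatorship L (takeSeat c (topAvailable (σ i) c))) i (topAvailable (σ i) c)

theorem hammingDist_serialDictatorship_add_single_le (L : List (Fin n)) (c : Fin p → ℕ)
    (j : Fin p) :
    hammingDist (serialDictatorship σ L c) (serialDictatorship σ L (c + Pi.single j 1))
      ≤ #{ℓ | 0 < c ℓ ∨ ℓ = j} := by
  induction L generalizing c j with
  | nil => simp [serialDictatorship]
  | cons i L ih =>
    simp only [serialDictatorship]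
    rcases topAvailable_add_single (π := σ i) c j with hsame | ⟨hcj, hspare⟩
    · rw [hsame]
      refine (hammingDist_update_same_le _ _ _ _).trans ?_
      rw [takeSeat_add_single (topAvailable_eq_iff.1 rfl).1]
      refine (ih _ j).trans (card_le_card (monotone_filter_right _ fun ℓ _ hℓ => ?_))
      exact hℓ.imp_left fun h => h.trans_le (takeSeat_le _ _ _)
    · rw [hspare, takeSeat_add_single_self]
      have hj : j ∈ ({ℓ | 0 < c ℓ ∨ ℓ = j} : Finset (Fin p)) := by simp
      cases htop : topAvailable (σ i) c with
      | none =>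
        have hc : takeSeat c none = c := by funext ℓ; simp [takeSeat]
        calc _ ≤ hammingDist (serialDictatorship σ L c) (serialDictatorship σ L c) + 1 := by
              rw [← hc]; exact hammingDist_update_le _ _ _ _ _
          _ ≤ _ := by simpa using card_pos.2 ⟨j, hj⟩
      | some m =>
        -- the spare seat moves to `m`, and `j` is full in both runs from now on
        have hm := pos_of_topAvailable_eq_some htop
        have hchain := ih (takeSeat c (some m)) m
        rw [takeSeat_some_add_single hm] at hchain
        have hle : #{ℓ | 0 < takeSeat c (some m) ℓ ∨ ℓ = m} ≤ #{ℓ | 0 < c ℓ} :=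
          card_le_card (monotone_filter_right _ fun ℓ _ hℓ =>
            hℓ.elim (fun h => h.trans_le (takeSeat_le _ _ _)) fun h => h ▸ hm)
        have hlt : #{ℓ | 0 < c ℓ} < #{ℓ | 0 < c ℓ ∨ ℓ = j} := by
          refine card_lt_card (ssubset_iff_of_subset ?_ |>.2 ⟨j, hj, by simp [hcj]⟩)
          exact monotone_filter_right _ fun ℓ _ hℓ => Or.inl hℓ
        exact (hammingDist_update_le _ _ _ _ _).trans (by omega)

end SerialDictatorship

section Stability

variable {uhat : Fin n → ℝ} {σ : Fin n → Equiv.Perm (Fin p)}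

noncomputable def seatsLeft (uhat : Fin n → ℝ) (M : Fin n → Option (Fin p)) (c : Fin p → ℕ)
    (s : Finset (Fin n)) (i : Fin n) (ℓ : Fin p) : ℕ :=
  c ℓ - #{x ∈ s | M x = some ℓ ∧ uhat i < uhat x}

theorem IsStable.eq_topAvailable {k : Fin p → ℕ} {M : Fin n → Option (Fin p)}
    (hu : Function.Injective uhat) (hM : IsStable uhat σ k M) (i : Fin n) :
    M i = topAvailable (σ i) (seatsLeft uhat M k univ i) := by
  refine (topAvailable_eq_iff.2 ⟨fun m hm => ?_, fun ℓ hℓ hpref => ?_⟩).symm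
  · have hlt : #{x | M x = some m ∧ uhat i < uhat x} < #(assignedTo M m) := by
      refine card_lt_card (ssubset_iff_of_subset ?_ |>.2 ⟨i, by simpa [assignedTo] using hm, ?_⟩)
      · exact monotone_filter_right _ fun x _ hx => hx.1
      · simp
    exact Nat.sub_pos_of_lt (hlt.trans_le (hM.1 m))
  · have hne : M i ≠ some ℓ := by
      rintro hi
      rw [hi] at hpref
      exact lt_irrefl _ (hpref : σ i ℓ < σ i ℓ)
    refine hM.2 i ℓ ⟨hne, hpref, ?_⟩
    by_contra! hfull
    -- every candidate at the full institution `ℓ` is ranked above `i`, so no seat is left for `i`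
    have hall : #(assignedTo M ℓ) ≤ #{x | M x = some ℓ ∧ uhat i < uhat x} := by
      refine card_le_card fun x hx => ?_
      have hxi : x ≠ i := by rintro rfl; exact hne (by simpa [assignedTo] using hx)
      simp only [assignedTo, mem_filter, mem_univ, true_and] at hx ⊢
      exact ⟨hx, (hfull.2 x (by simpa [assignedTo] using hx)).lt_of_ne (hu.ne hxi.symm)⟩
    exact hℓ.ne' (Nat.sub_eq_zero_of_le (hfull.1.trans hall))

theorem serialDictatorship_eq_of_eq_topAvailable {M : Fin n → Option (Fin p)}
    (L : List (Fin n)) (hL : L.Pairwise fun a b => uhat b < uhat a) (c : Fin p → ℕ)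
    (hM : ∀ i ∈ L, M i = topAvailable (σ i) (seatsLeft uhat M c L.toFinset i)) :
    ∀ i ∈ L, serialDictatorship σ L c i = M i := by
  induction L generalizing c with
  | nil => simp
  | cons j L ih =>
    obtain ⟨hjL, hL⟩ := List.pairwise_cons.1 hL
    have hj : M j = topAvailable (σ j) c := by
      rw [hM j List.mem_cons_self]
      congr 1
      funext ℓ
      suffices #{x ∈ (j :: L).toFinset | M x = some ℓ ∧ uhat j < uhat x} = 0 by
        rw [seatsLeft, this, Nat.sub_zero]
      refine card_eq_zero.2 (filter_eq_empty_iff.2 fun x hx h => ?_)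
      rcases List.mem_cons.1 (List.mem_toFinset.1 hx) with rfl | hx
      · exact lt_irrefl _ h.2
      · exact lt_asymm h.2 (hjL x hx)
    have hseats : ∀ i ∈ L, seatsLeft uhat M c (j :: L).toFinset i
        = seatsLeft uhat M (takeSeat c (M j)) L.toFinset i := by
      intro i hi
      funext ℓ
      have hjL' : j ∉ L.toFinset := fun h => lt_irrefl _ (hjL j (List.mem_toFinset.1 h))
      simp only [seatsLeft, takeSeat, List.toFinset_cons, filter_insert, hjL i hi, and_true]
      by_cases hjℓ : M j = some ℓ
      · rw [if_pos hjℓ, if_pos hjℓ, card_insert_of_notMem fun h => hjL' (mem_filter.1 h).1]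
        omega
      · simp [hjℓ]
    intro i hi
    simp only [serialDictatorship]
    rcases List.mem_cons.1 hi with rfl | hiL
    · simp [hj]
    · have hij : i ≠ j := by rintro rfl; exact lt_irrefl _ (hjL i hiL)
      rw [Function.update_of_ne hij, ← hj]
      exact ih hL _ (fun i' hi' => (hM i' (List.mem_cons_of_mem _ hi')).trans
        (by rw [hseats i' hi'])) i hiL

end Stability

theorem stable_lipschitz_in_capacities_general
    (n p : ℕ)
    (uhat : Fin n → ℝ) (huhat : Function.Injective uhat)
    (σ : Fin n → Equiv.Perm (Fin p))
    (k k' : Fin p → ℕ)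
    (M M' : Fin n → Option (Fin p))
    (hM : IsStable uhat σ k M) (hM' : IsStable uhat σ k' M') :
    (Finset.univ.filter fun i => M i ≠ M' i).card
      ≤ p * ∑ ℓ : Fin p, ((k ℓ : ℤ) - (k' ℓ : ℤ)).natAbs := by
  obtain ⟨L, hL, hsorted⟩ := exists_list_pairwise_gt huhat
  have hLuniv : L.toFinset = univ := eq_univ_of_forall fun x => List.mem_toFinset.2 (hL x)
  have hsd : ∀ {c N}, IsStable uhat σ c N → N = serialDictatorship σ L c := fun hN =>
    funext fun i => (serialDictatorship_eq_of_eq_topAvailable L hsorted _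
      (fun i _ => hLuniv ▸ hN.eq_topAvailable huhat i) i (hL i)).symm
  rw [hsd hM, hsd hM']
  refine hammingDist_le_mul_sum_natAbs _ p (fun c j => ?_) k k'
  exact (hammingDist_serialDictatorship_add_single_le σ L c j).trans
    ((card_le_univ _).trans_eq (Fintype.card_fin p))

/-- If two instances share the utilities and preferences and have
capacity vectors `k` and `k'` with total coordinatewise difference `D`, then the stable
assignments differ on at most `p * D` candidates. -/
theorem stable_lipschitz_in_capacities
    (n p : ℕ) (hp : 1 ≤ p)
    (uhat : Fin n → ℝ) (huhat : Function.Injective uhat)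
    (σ : Fin n → Equiv.Perm (Fin p))
    (k k' : Fin p → ℕ)
    (M M' : Fin n → Option (Fin p))
    (hM : IsStable uhat σ k M) (hM' : IsStable uhat σ k' M') :
    (Finset.univ.filter fun i => M i ≠ M' i).card
      ≤ p * ∑ ℓ : Fin p, ((k ℓ : ℤ) - (k' ℓ : ℤ)).natAbs :=
  stable_lipschitz_in_capacities_general n p uhat huhat σ k k' M M' hM hM'
end

section
/- In the β-bias uniform model with K ≤ n, let S be the set of the K candidates with the largest observed utilities and define α₁ := K − (n₂/(β·n₁ + n₂))·max{K − (1−β)·n₁, 0} and α₂ := K − α₁. Then there is a universal constant C > 0 such that with probability at least 1 − C/n², for both j ∈ {1,2}, | |S ∩ G_j| − α_j | ≤ C·√(n·log n). -/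
/-!
Let `m t = n₁ · P(U > t) + n₂ · P(U > t / β)` be the expected number of candidates whose observed
utility exceeds `t`. It decreases continuously from `n` to `0` on `[0, 1]`, and at the threshold
`t₀` with `m t₀ = K` the two summands are exactly `α₁` and `α₂`. Put `Δ = √(n log n)` and pick
thresholds `tₕ`, `tₗ` with `m tₕ = K - 2Δ`, `m tₗ = K + 2Δ`. By Hoeffding's inequality, with
probability at least `1 - 8 / n²` each group's count above `tₕ` and above `tₗ` is within `Δ` of its
mean. Then at most `K` candidates exceed `tₕ` and at least `K` exceed `tₗ`, so `S` lies between
these two level sets, and since both summands of `m` are antitone, each group's share of `S` is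
within `3Δ` of `αⱼ`. If `K ∓ 2Δ` lies outside `[0, n]`, the corresponding bound holds trivially.
-/

open MeasureTheory ProbabilityTheory Finset

/-- The set of the `K` candidates with the largest values of `x` (assuming the values of
`x` are pairwise distinct): `i` belongs to `topK K x` iff at most `K` candidates `j`
(including `i` itself) satisfy `x i ≤ x j`. -/
noncomputable def topK {n : ℕ} (K : ℕ) (x : Fin n → ℝ) : Finset (Fin n) :=
  Finset.univ.filter fun i => (Finset.univ.filter fun j => x i ≤ x j).card ≤ K

/-- Observed utilities in the β-bias model: `û_i = u_i` on `G₁` and `û_i = β·u_i` on the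
complement of `G₁`. -/
noncomputable def obsUtil {n : ℕ} (G₁ : Finset (Fin n)) (β : ℝ) (u : Fin n → ℝ) :
    Fin n → ℝ :=
  fun i => if i ∈ G₁ then u i else β * u i

/-- `α₁ = K − (n₂/(β·n₁ + n₂))·max{K − (1−β)·n₁, 0}`. -/
noncomputable def alpha1 (K n₁ n₂ : ℕ) (β : ℝ) : ℝ :=
  (K : ℝ) - ((n₂ : ℝ) / (β * n₁ + n₂)) * max ((K : ℝ) - (1 - β) * n₁) 0

open Real

noncomputable def uniformTail (d : ℝ) : ℝ := max (1 - max d 0) 0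

lemma uniformTail_antitone : Antitone uniformTail := fun _ _ hab => by
  unfold uniformTail; gcongr

@[fun_prop]
lemma continuous_uniformTail : Continuous uniformTail := by
  unfold uniformTail; fun_prop

lemma uniformTail_of_nonpos {d : ℝ} (hd : d ≤ 0) : uniformTail d = 1 := by
  simp [uniformTail, hd]

lemma uniformTail_of_one_le {d : ℝ} (hd : 1 ≤ d) : uniformTail d = 0 := by
  rw [uniformTail, max_eq_left (by linarith : (0 : ℝ) ≤ d), max_eq_right (by linarith)]

lemma uniformTail_of_mem_Icc {d : ℝ} (hd : d ∈ Set.Icc 0 1) : uniformTail d = 1 - d := by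
  simp [uniformTail, hd.1, hd.2]

lemma uniformTail_mem_Icc (d : ℝ) : uniformTail d ∈ Set.Icc 0 1 := by
  simp [uniformTail]

lemma measureReal_Ioi_uniform (d : ℝ) :
    (volume.restrict (Set.Icc (0 : ℝ) 1)).real (Set.Ioi d) = uniformTail d := by
  have hsub : Set.Ioi d ∩ Set.Icc 0 1 ⊆ Set.Icc (max d 0) 1 := fun y ⟨hd, h0, h1⟩ =>
    ⟨max_le hd.le h0, h1⟩
  have hsup : Set.Ioc (max d 0) 1 ⊆ Set.Ioi d ∩ Set.Icc 0 1 := fun y ⟨hy, h1⟩ =>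
    ⟨(le_max_left _ _).trans_lt hy, (le_max_right _ _).trans hy.le, h1⟩
  have : volume (Set.Ioi d ∩ Set.Icc 0 1) = ENNReal.ofReal (1 - max d 0) :=
    le_antisymm ((measure_mono hsub).trans_eq Real.volume_Icc)
      (Real.volume_Ioc.symm.trans_le (measure_mono hsup))
  rw [measureReal_def, Measure.restrict_apply measurableSet_Ioi, this,
    ENNReal.toReal_ofReal']
  rfl

section ExpectedCount

noncomputable def expectedCountAbove (n₁ n₂ : ℕ) (β t : ℝ) : ℝ :=
  n₁ * uniformTail t + n₂ * uniformTail (t / β)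

variable {K n₁ n₂ : ℕ} {β : ℝ}

lemma exists_expectedCountAbove_eq (hβ : 0 < β) (hβ1 : β ≤ 1) {y : ℝ}
    (hy : y ∈ Set.Icc 0 ((n₁ : ℝ) + n₂)) :
    ∃ t ∈ Set.Icc (0 : ℝ) 1, expectedCountAbove n₁ n₂ β t = y := by
  have hcont : Continuous (expectedCountAbove n₁ n₂ β) := by
    unfold expectedCountAbove; fun_prop
  have hβinv : uniformTail β⁻¹ = 0 := uniformTail_of_one_le (one_le_inv₀ hβ |>.2 hβ1)
  apply intermediate_value_Icc' zero_le_one hcont.continuousOn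
  simpa [expectedCountAbove, uniformTail_of_nonpos, uniformTail_of_one_le, hβinv] using hy

lemma alpha1_eq (hβ : 0 < β) {t : ℝ} (ht : t ∈ Set.Icc 0 1)
    (hK : expectedCountAbove n₁ n₂ β t = K) : alpha1 K n₁ n₂ β = n₁ * uniformTail t := by
  rw [expectedCountAbove, uniformTail_of_mem_Icc ht] at hK
  rw [uniformTail_of_mem_Icc ht]
  unfold alpha1
  rcases le_or_gt β t with hβt | htβ
  · rw [uniformTail_of_one_le ((one_le_div hβ).2 hβt)] at hK
    rw [max_eq_right (by nlinarith [n₁.cast_nonneg (α := ℝ)])]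
    linarith
  · rw [uniformTail_of_mem_Icc ⟨div_nonneg ht.1 hβ.le, (div_le_one hβ).2 htβ.le⟩] at hK
    have hK' : (K : ℝ) * β = n₁ * (1 - t) * β + n₂ * (β - t) := by
      rw [← hK]; field_simp
    -- the factor `β * n₁ + n₂` cancels the denominator of `alpha1`
    have hexcess : (K : ℝ) - (1 - β) * n₁ = (β - t) * (β * n₁ + n₂) / β := by
      rw [eq_div_iff hβ.ne']; linear_combination hK'
    have hβt : 0 < β - t := sub_pos.2 htβ
    rw [max_eq_left (by rw [hexcess]; positivity)]
    rcases eq_or_ne (β * n₁ + n₂) 0 with hD | hD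
    · -- both groups are empty and `alpha1` divides by zero
      have hn₂ : (n₂ : ℝ) = 0 := by
        nlinarith [n₁.cast_nonneg (α := ℝ), n₂.cast_nonneg (α := ℝ)]
      rw [hD, div_zero, zero_mul, sub_zero, ← hK, hn₂, zero_mul, add_zero]
    · rw [hexcess]; field_simp; linear_combination hK'

lemma antitone_natCast_mul_uniformTail (m : ℕ) : Antitone fun t => (m : ℝ) * uniformTail t :=
  fun _ _ hab => mul_le_mul_of_nonneg_left (uniformTail_antitone hab) m.cast_nonneg

lemma antitone_natCast_mul_uniformTail_div (m : ℕ) (hβ : 0 < β) :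
    Antitone fun t => (m : ℝ) * uniformTail (t / β) :=
  (antitone_natCast_mul_uniformTail m).comp_monotone fun _ _ hab =>
    div_le_div_of_nonneg_right hab hβ.le

lemma natCast_mul_uniformTail_mem_Icc (m : ℕ) (d : ℝ) :
    (m : ℝ) * uniformTail d ∈ Set.Icc 0 (m : ℝ) :=
  ⟨mul_nonneg m.cast_nonneg (uniformTail_mem_Icc d).1,
    mul_le_of_le_one_right m.cast_nonneg (uniformTail_mem_Icc d).2⟩

end ExpectedCount

section Concentration

variable {Ω ι : Type*} [MeasurableSpace Ω] {μ : Measure Ω} [IsProbabilityMeasure μ]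
  {X : ι → Ω → ℝ}

lemma ofReal_one_sub_le_measure_of_forall_notMem [Fintype ι] {B : ι → Set Ω} {T : Set Ω}
    {p : ℝ} (hp : 0 ≤ p) (hB : ∀ k, μ (B k) ≤ ENNReal.ofReal p)
    (hT : ∀ ω, (∀ k, ω ∉ B k) → ω ∈ T) :
    ENNReal.ofReal (1 - Fintype.card ι * p) ≤ μ T := by
  have hunion : μ (⋃ k, B k) ≤ ENNReal.ofReal (Fintype.card ι * p) :=
    calc μ (⋃ k, B k) ≤ ∑ k, μ (B k) := measure_iUnion_fintype_le μ B
      _ ≤ ∑ _k : ι, ENNReal.ofReal p := sum_le_sum fun k _ => hB k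
      _ = ENNReal.ofReal (Fintype.card ι * p) := by
        rw [sum_const, nsmul_eq_mul, ENNReal.ofReal_mul (by positivity), ENNReal.ofReal_natCast,
          card_univ]
  have hcompl : (⋃ k, B k)ᶜ ⊆ T := fun ω hω => hT ω fun k hk => hω (Set.mem_iUnion.2 ⟨k, hk⟩)
  calc ENNReal.ofReal (1 - Fintype.card ι * p)
      = 1 - ENNReal.ofReal (Fintype.card ι * p) := by
        rw [ENNReal.ofReal_sub _ (by positivity), ENNReal.ofReal_one]
    _ ≤ 1 - μ (⋃ k, B k) := tsub_le_tsub_left hunion 1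
    _ ≤ μ (⋃ k, B k)ᶜ :=
        tsub_le_iff_left.2 (measure_univ.symm.trans_le (measure_univ_le_add_compl _))
    _ ≤ μ T := measure_mono hcompl

lemma two_mul_exp_neg_two_mul_sqrt_mul_log_sq_div {n : ℕ} (hn : 1 ≤ n) :
    2 * exp (-2 * √(n * log n) ^ 2 / n) = 2 / n ^ 2 := by
  have hn' : (1 : ℝ) ≤ n := by exact_mod_cast hn
  rw [sq_sqrt (mul_nonneg (by linarith) (log_nonneg hn')),
    show -2 * (n * log n) / n = -log ((n : ℝ) ^ 2) by rw [log_pow]; field_simp; push_cast; ring,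
    exp_neg, exp_log (by positivity), div_eq_mul_inv]

lemma measureReal_abs_sum_sub_integral_ge_le (hind : iIndepFun X μ)
    (hX : ∀ i, AEMeasurable (X i) μ) (hbdd : ∀ i, ∀ᵐ ω ∂μ, X i ω ∈ Set.Icc 0 1)
    (s : Finset ι) {ε : ℝ} (hε : 0 ≤ ε) :
    μ.real {ω | ε ≤ |∑ i ∈ s, (X i ω - μ[X i])|} ≤ 2 * exp (-2 * ε ^ 2 / #s) := by
  let Y : ι → Ω → ℝ := fun i => (fun y => y - μ[X i]) ∘ X i
  have hsubG : ∀ i, HasSubgaussianMGF (Y i) (1 / 4) μ := fun i => by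
    have h := hasSubgaussianMGF_of_mem_Icc (hX i) (hbdd i)
    norm_num at h
    exact h
  have hindY : iIndepFun Y μ :=
    hind.comp (fun i y => y - μ[X i]) (fun _ => measurable_id.sub_const _)
  have hparam : -ε ^ 2 / (2 * ∑ _i ∈ s, ((1 / 4 : NNReal) : ℝ)) = -2 * ε ^ 2 / #s := by
    simp only [sum_const, nsmul_eq_mul]; push_cast; ring_nf
  have hupper := HasSubgaussianMGF.measure_sum_ge_le_of_iIndepFun hindY
    (s := s) (fun i _ => hsubG i) hε
  have hlower := HasSubgaussianMGF.measure_sum_ge_le_of_iIndepFun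
    (hindY.comp (fun _ x => -x) fun _ => measurable_neg) (s := s) (fun i _ => (hsubG i).neg) hε
  simp only [Function.comp_apply, NNReal.coe_sum, hparam, sum_neg_distrib]
    at hupper hlower
  calc μ.real {ω | ε ≤ |∑ i ∈ s, Y i ω|}
      ≤ μ.real ({ω | ε ≤ ∑ i ∈ s, Y i ω} ∪ {ω | ε ≤ -∑ i ∈ s, Y i ω}) :=
        measureReal_mono fun ω hω => by rw [Set.mem_ofPred_eq] at hω; exact le_abs.1 hω
    _ ≤ _ := (measureReal_union_le _ _).trans (by linarith)

variable {u : ι → Ω → ℝ}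

-- `m` is any upper bound for `#s`: for `s = ∅` the exponent `-2 * ε ^ 2 / #s` is `0`.
lemma measure_abs_card_filter_lt_sub_ge_le (hind : iIndepFun u μ)
    (hlaw : ∀ i, μ.map (u i) = volume.restrict (Set.Icc 0 1)) (s : Finset ι) (d : ℝ)
    {ε m : ℝ} (hε : 0 < ε) (hs : (#s : ℝ) ≤ m) :
    μ {ω | ε ≤ |(#{i ∈ s | d < u i ω} : ℝ) - #s * uniformTail d|}
      ≤ ENNReal.ofReal (2 * exp (-2 * ε ^ 2 / m)) := by
  rcases s.eq_empty_or_nonempty with rfl | hne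
  · simp [not_le.2 hε]
  have hu : ∀ i, AEMeasurable (u i) μ := fun i =>
    AEMeasurable.of_map_ne_zero (by simp [hlaw, Measure.restrict_eq_zero])
  let X : ι → Ω → ℝ := fun i => (Set.Ioi d).indicator 1 ∘ u i
  have hX : ∀ i, μ[X i] = uniformTail d := fun i => by
    calc μ[X i] = ∫ y, (Set.Ioi d).indicator 1 y ∂(μ.map (u i)) :=
          (integral_map (hu i)
            (measurable_const.indicator measurableSet_Ioi).aestronglyMeasurable).symm
      _ = uniformTail d := by
          rw [integral_indicator_one measurableSet_Ioi, hlaw, measureReal_Ioi_uniform]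
  have hsum : ∀ ω, ∑ i ∈ s, (X i ω - μ[X i]) = #{i ∈ s | d < u i ω} - #s * uniformTail d :=
    fun ω => by
      rw [sum_sub_distrib, natCast_card_filter]
      simp only [hX, sum_const, nsmul_eq_mul]
      simp [X, Set.indicator_apply]
  have hbound := measureReal_abs_sum_sub_integral_ge_le (X := X)
    (hind.comp _ fun _ => measurable_const.indicator measurableSet_Ioi)
    (fun i => (measurable_const.indicator measurableSet_Ioi).comp_aemeasurable (hu i))
    (fun i => ae_of_all _ fun ω => by
      simp only [X, Function.comp_apply, Set.indicator_apply]; split_ifs <;> simp)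
    s hε.le
  simp only [hsum] at hbound
  rw [ENNReal.le_ofReal_iff_toReal_le (measure_ne_top _ _) (by positivity)]
  refine hbound.trans ?_
  gcongr 2 * exp ?_
  rw [neg_mul, neg_div, neg_div, neg_le_neg_iff]
  exact div_le_div_of_nonneg_left (by positivity) (by exact_mod_cast hne.card_pos) hs

end Concentration

section TopK

variable {n K : ℕ} {x : Fin n → ℝ} {t : ℝ}

lemma filter_lt_subset_topK (h : #{i | t < x i} ≤ K) :
    ({i | t < x i} : Finset (Fin n)) ⊆ topK K x := by
  intro i hi
  simp only [topK, mem_filter, mem_univ, true_and] at hi ⊢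
  exact (card_le_card fun j hj => by simp only [mem_filter] at hj ⊢; grind).trans h

lemma topK_subset_filter_lt (h : K ≤ #{i | t < x i}) :
    topK K x ⊆ ({i | t < x i} : Finset (Fin n)) := by
  intro i hi
  simp only [topK, mem_filter, mem_univ, true_and] at hi ⊢
  by_contra! hit
  have hnot : i ∉ ({j | t < x j} : Finset _) := by simpa using hit
  have hsub : insert i ({j | t < x j} : Finset (Fin n)) ⊆ ({j | x i ≤ x j} : Finset _) := by
    intro j hj
    rcases mem_insert.1 hj with rfl | hj
    · simp
    · simpa using hit.trans (mem_filter.1 hj).2.le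
  have := card_le_card hsub
  rw [card_insert_of_notMem hnot] at this
  omega

lemma card_filter_lt_le_card_topK_inter (h : #{i | t < x i} ≤ K) (G : Finset (Fin n)) :
    #{i ∈ G | t < x i} ≤ #(topK K x ∩ G) :=
  card_le_card fun i hi => by
    rw [mem_filter] at hi
    exact mem_inter.2 ⟨filter_lt_subset_topK h (by simpa using hi.2), hi.1⟩

lemma card_topK_inter_le_card_filter_lt (h : K ≤ #{i | t < x i}) (G : Finset (Fin n)) :
    #(topK K x ∩ G) ≤ #{i ∈ G | t < x i} :=
  card_le_card fun i hi => by
    rw [mem_inter] at hi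
    exact mem_filter.2 ⟨hi.2, by simpa using topK_subset_filter_lt h hi.1⟩

end TopK

lemma card_filter_add_card_filter_of_partition {ι : Type*} [Fintype ι] [DecidableEq ι]
    {G₁ G₂ : Finset ι} (hdisj : Disjoint G₁ G₂) (hunion : G₁ ∪ G₂ = univ) (p : ι → Prop)
    [DecidablePred p] :
    #{i ∈ G₁ | p i} + #{i ∈ G₂ | p i} = #{i | p i} := by
  rw [← card_union_of_disjoint (disjoint_filter_filter hdisj), ← filter_union, hunion]

lemma abs_sub_le_abs_add_sub_add {f g : ℝ → ℝ} (hf : Antitone f) (hg : Antitone g) (a b : ℝ) :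
    |f a - f b| ≤ |f a + g a - (f b + g b)| := by
  rcases le_total a b with hab | hab
  · have := hf hab; have := hg hab
    rw [abs_of_nonneg (by linarith), abs_of_nonneg (by linarith)]; linarith
  · have := hf hab; have := hg hab
    rw [abs_of_nonpos (by linarith), abs_of_nonpos (by linarith)]; linarith

def CountsNear {n : ℕ} (x : Fin n → ℝ) (G₁ G₂ : Finset (Fin n)) (f₁ f₂ : ℝ → ℝ)
    (Δ t : ℝ) : Prop :=
  |(#{i ∈ G₁ | t < x i} : ℝ) - f₁ t| < Δ ∧ |(#{i ∈ G₂ | t < x i} : ℝ) - f₂ t| < Δ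

section Sandwich

variable {n K : ℕ} {x : Fin n → ℝ} {G₁ G₂ : Finset (Fin n)} {f₁ f₂ : ℝ → ℝ} {t₀ t Δ : ℝ}

lemma sub_le_card_topK_inter (hdisj : Disjoint G₁ G₂) (hunion : G₁ ∪ G₂ = univ)
    (hf₁ : Antitone f₁) (hf₂ : Antitone f₂) (hf₂t₀ : 0 ≤ f₂ t₀) (ht₀ : f₁ t₀ + f₂ t₀ = K)
    (ht : 0 ≤ (K : ℝ) - 2 * Δ → f₁ t + f₂ t = K - 2 * Δ) (h : CountsNear x G₁ G₂ f₁ f₂ Δ t) :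
    f₁ t₀ - 3 * Δ ≤ #(topK K x ∩ G₁) := by
  obtain ⟨h₁, h₂⟩ := h
  have hΔ : 0 < Δ := (abs_nonneg _).trans_lt h₁
  by_cases hK : 0 ≤ (K : ℝ) - 2 * Δ
  · have hm := ht hK
    have hcount : #{i | t < x i} ≤ K := by
      rw [← card_filter_add_card_filter_of_partition hdisj hunion]
      rw [abs_lt] at h₁ h₂
      exact_mod_cast (show ((#{i ∈ G₁ | t < x i} + #{i ∈ G₂ | t < x i} : ℕ) : ℝ) ≤ K by
        push_cast; linarith)
    have hsel : (#{i ∈ G₁ | t < x i} : ℝ) ≤ #(topK K x ∩ G₁) := by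
      exact_mod_cast card_filter_lt_le_card_topK_inter hcount G₁
    have hdev := abs_sub_le_abs_add_sub_add hf₁ hf₂ t₀ t
    rw [ht₀, hm, sub_sub_cancel, abs_of_pos (by linarith : (0 : ℝ) < 2 * Δ), abs_le] at hdev
    rw [abs_lt] at h₁
    linarith
  · have : (0 : ℝ) ≤ #(topK K x ∩ G₁) := Nat.cast_nonneg _
    linarith

lemma card_topK_inter_le_add (hdisj : Disjoint G₁ G₂) (hunion : G₁ ∪ G₂ = univ)
    (hf₁ : Antitone f₁) (hf₂ : Antitone f₂) (hf₂t₀ : f₂ t₀ ≤ #G₂) (ht₀ : f₁ t₀ + f₂ t₀ = K)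
    (ht : (K : ℝ) + 2 * Δ ≤ n → f₁ t + f₂ t = K + 2 * Δ) (h : CountsNear x G₁ G₂ f₁ f₂ Δ t) :
    #(topK K x ∩ G₁) ≤ f₁ t₀ + 3 * Δ := by
  obtain ⟨h₁, h₂⟩ := h
  have hΔ : 0 < Δ := (abs_nonneg _).trans_lt h₁
  by_cases hK : (K : ℝ) + 2 * Δ ≤ n
  · have hm := ht hK
    have hcount : K ≤ #{i | t < x i} := by
      rw [← card_filter_add_card_filter_of_partition hdisj hunion]
      rw [abs_lt] at h₁ h₂
      exact_mod_cast (show (K : ℝ) ≤ ((#{i ∈ G₁ | t < x i} + #{i ∈ G₂ | t < x i} : ℕ) : ℝ) by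
        push_cast; linarith)
    have hsel : (#(topK K x ∩ G₁) : ℝ) ≤ #{i ∈ G₁ | t < x i} := by
      exact_mod_cast card_topK_inter_le_card_filter_lt hcount G₁
    have hdev := abs_sub_le_abs_add_sub_add hf₁ hf₂ t₀ t
    rw [ht₀, hm, sub_add_cancel_left, abs_neg, abs_of_pos (by linarith : (0 : ℝ) < 2 * Δ),
      abs_le] at hdev
    rw [abs_lt] at h₁
    linarith
  · have hcard : (#G₁ : ℝ) + #G₂ = n := by
      rw [← Nat.cast_add, ← card_union_of_disjoint hdisj, hunion, card_univ, Fintype.card_fin]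
    have : (#(topK K x ∩ G₁) : ℝ) ≤ #G₁ := by exact_mod_cast card_le_card inter_subset_right
    linarith

theorem abs_card_topK_inter_sub_le (hdisj : Disjoint G₁ G₂) (hunion : G₁ ∪ G₂ = univ)
    (hf₁ : Antitone f₁) (hf₂ : Antitone f₂) (hf₁t₀ : f₁ t₀ ∈ Set.Icc 0 (#G₁ : ℝ))
    (hf₂t₀ : f₂ t₀ ∈ Set.Icc 0 (#G₂ : ℝ)) (ht₀ : f₁ t₀ + f₂ t₀ = K) {tₕ tₗ : ℝ}
    (htₕ : 0 ≤ (K : ℝ) - 2 * Δ → f₁ tₕ + f₂ tₕ = K - 2 * Δ)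
    (htₗ : (K : ℝ) + 2 * Δ ≤ n → f₁ tₗ + f₂ tₗ = K + 2 * Δ)
    (hₕ : CountsNear x G₁ G₂ f₁ f₂ Δ tₕ) (hₗ : CountsNear x G₁ G₂ f₁ f₂ Δ tₗ) :
    |(#(topK K x ∩ G₁) : ℝ) - f₁ t₀| ≤ 3 * Δ ∧ |(#(topK K x ∩ G₂) : ℝ) - f₂ t₀| ≤ 3 * Δ := by
  have hunion' : G₂ ∪ G₁ = univ := union_comm G₁ G₂ ▸ hunion
  have ht₀' : f₂ t₀ + f₁ t₀ = K := by linarith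
  refine ⟨abs_le.2 ⟨?_, ?_⟩, abs_le.2 ⟨?_, ?_⟩⟩
  · linarith [sub_le_card_topK_inter hdisj hunion hf₁ hf₂ hf₂t₀.1 ht₀ htₕ hₕ]
  · linarith [card_topK_inter_le_add hdisj hunion hf₁ hf₂ hf₂t₀.2 ht₀ htₗ hₗ]
  · linarith [sub_le_card_topK_inter hdisj.symm hunion' hf₂ hf₁ hf₁t₀.1 ht₀'
      (fun h => by linarith [htₕ h]) (And.symm hₕ)]
  · linarith [card_topK_inter_le_add hdisj.symm hunion' hf₂ hf₁ hf₁t₀.2 ht₀'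
      (fun h => by linarith [htₗ h]) (And.symm hₗ)]

end Sandwich

section Model

variable {n : ℕ} {G₁ G₂ : Finset (Fin n)} {β : ℝ}

lemma filter_lt_obsUtil_of_mem (v : Fin n → ℝ) (t : ℝ) :
    {i ∈ G₁ | t < obsUtil G₁ β v i} = {i ∈ G₁ | t < v i} :=
  filter_congr fun i hi => by rw [obsUtil, if_pos hi]

lemma filter_lt_obsUtil_of_disjoint (hdisj : Disjoint G₁ G₂) (hβ : 0 < β) (v : Fin n → ℝ)
    (t : ℝ) : {i ∈ G₂ | t < obsUtil G₁ β v i} = {i ∈ G₂ | t / β < v i} :=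
  filter_congr fun i hi => by
    rw [obsUtil, if_neg (disjoint_right.1 hdisj hi), div_lt_iff₀ hβ, mul_comm]

variable {Ω : Type*} [MeasurableSpace Ω] {μ : Measure Ω} [IsProbabilityMeasure μ]
  {u : Fin n → Ω → ℝ}

lemma ofReal_one_sub_le_measure_countsNear (hind : iIndepFun u μ)
    (hlaw : ∀ i, μ.map (u i) = volume.restrict (Set.Icc 0 1)) (hdisj : Disjoint G₁ G₂)
    (hβ : 0 < β) (hn : 1 < n) (tₕ tₗ : ℝ) :
    ENNReal.ofReal (1 - 8 / n ^ 2) ≤ μ {ω |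
      CountsNear (obsUtil G₁ β fun i => u i ω) G₁ G₂ (fun t => #G₁ * uniformTail t)
        (fun t => #G₂ * uniformTail (t / β)) √(n * log n) tₕ ∧
      CountsNear (obsUtil G₁ β fun i => u i ω) G₁ G₂ (fun t => #G₁ * uniformTail t)
        (fun t => #G₂ * uniformTail (t / β)) √(n * log n) tₗ} := by
  have hΔ : 0 < √(n * log n) :=
    sqrt_pos.2 (mul_pos (by positivity) (log_pos (by exact_mod_cast hn)))
  let events : Fin 4 → Finset (Fin n) × ℝ := ![(G₁, tₕ), (G₂, tₕ / β), (G₁, tₗ), (G₂, tₗ / β)]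
  refine (le_of_eq ?_).trans (ofReal_one_sub_le_measure_of_forall_notMem (p := 2 / n ^ 2)
    (B := fun k => {ω | √(n * log n) ≤ |(#{i ∈ (events k).1 | (events k).2 < u i ω} : ℝ)
      - #(events k).1 * uniformTail (events k).2|})
    (by positivity)
    (fun k => two_mul_exp_neg_two_mul_sqrt_mul_log_sq_div hn.le ▸
      measure_abs_card_filter_lt_sub_ge_le hind hlaw _ _ hΔ
        (by exact_mod_cast (card_le_univ _).trans_eq (Fintype.card_fin n)))
    fun ω hω => ?_)
  · rw [Fintype.card_fin]; ring_nf
  have h := fun k => not_le.1 (Set.notMem_ofPred_iff.1 (hω k))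
  simp only [Set.mem_ofPred_eq, CountsNear, filter_lt_obsUtil_of_mem,
    filter_lt_obsUtil_of_disjoint hdisj hβ]
  exact ⟨⟨h 0, h 1⟩, h 2, h 3⟩

end Model

/-- In the β-bias uniform model with `K ≤ n`, with `S` the set of the
`K` candidates with the largest observed utilities, there is a universal constant
`C > 0` such that with probability at least `1 − C/n²`, for both `j ∈ {1,2}`,
`| |S ∩ G_j| − α_j | ≤ C·√(n·log n)`. -/
theorem selection_counts_whp :
    ∃ C : ℝ, 0 < C ∧
      ∀ (n n₁ n₂ K : ℕ), 2 ≤ n → K ≤ n →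
      ∀ (Ω : Type) (_ : MeasurableSpace Ω) (μ : Measure Ω), IsProbabilityMeasure μ →
      ∀ (u : Fin n → Ω → ℝ),
        iIndepFun u μ →
        (∀ i, Measure.map (u i) μ = volume.restrict (Set.Icc (0 : ℝ) 1)) →
      ∀ (G₁ G₂ : Finset (Fin n)), Disjoint G₁ G₂ → G₁ ∪ G₂ = Finset.univ →
        G₁.card = n₁ → G₂.card = n₂ →
      ∀ (β : ℝ), 0 < β → β ≤ 1 →
      ENNReal.ofReal (1 - C / (n : ℝ) ^ 2) ≤
        μ {ω |
          |((topK K (obsUtil G₁ β fun i => u i ω) ∩ G₁).card : ℝ)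
              - alpha1 K n₁ n₂ β| ≤ C * Real.sqrt (n * Real.log n) ∧
          |((topK K (obsUtil G₁ β fun i => u i ω) ∩ G₂).card : ℝ)
              - ((K : ℝ) - alpha1 K n₁ n₂ β)| ≤ C * Real.sqrt (n * Real.log n)} := by
  refine ⟨8, by norm_num, ?_⟩
  intro n n₁ n₂ K hn hK Ω _ μ _ u hind hlaw G₁ G₂ hdisj hunion hG₁ hG₂ β hβ hβ1
  subst hG₁ hG₂
  set Δ := √(n * log n)
  have hΔ : 0 ≤ Δ := sqrt_nonneg _
  have hcard : (#G₁ : ℝ) + #G₂ = n := by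
    rw [← Nat.cast_add, ← card_union_of_disjoint hdisj, hunion, card_univ, Fintype.card_fin]
  have hKn : (K : ℝ) ≤ n := by exact_mod_cast hK
  have hthreshold : ∀ y : ℝ, ∃ t, y ∈ Set.Icc 0 (n : ℝ) →
      expectedCountAbove #G₁ #G₂ β t = y := fun y => by
    by_cases hy : y ∈ Set.Icc 0 (n : ℝ)
    · obtain ⟨t, -, ht⟩ := exists_expectedCountAbove_eq hβ hβ1 (by rwa [hcard])
      exact ⟨t, fun _ => ht⟩
    · exact ⟨0, fun h => absurd h hy⟩
  obtain ⟨t₀, ht₀, hK₀⟩ := exists_expectedCountAbove_eq (n₁ := #G₁) (n₂ := #G₂) (y := K) hβ hβ1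
    (by rw [hcard]; exact ⟨K.cast_nonneg, hKn⟩)
  obtain ⟨tₕ, htₕ⟩ := hthreshold (K - 2 * Δ)
  obtain ⟨tₗ, htₗ⟩ := hthreshold (K + 2 * Δ)
  refine (ofReal_one_sub_le_measure_countsNear hind hlaw hdisj hβ hn tₕ tₗ).trans
    (measure_mono fun ω ⟨hₕ, hₗ⟩ => ?_)
  have hb := abs_card_topK_inter_sub_le hdisj hunion (antitone_natCast_mul_uniformTail _)
    (antitone_natCast_mul_uniformTail_div _ hβ) (natCast_mul_uniformTail_mem_Icc _ _)
    (natCast_mul_uniformTail_mem_Icc _ _) hK₀ (fun h => htₕ ⟨h, by linarith⟩)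
    (fun h => htₗ ⟨by positivity, h⟩) hₕ hₗ
  rw [Set.mem_ofPred_eq, alpha1_eq hβ ht₀ hK₀,
    show (K : ℝ) - #G₁ * uniformTail t₀ = #G₂ * uniformTail (t₀ / β) by
      rw [← hK₀, expectedCountAbove]; ring]
  exact ⟨hb.1.trans (by linarith), hb.2.trans (by linarith)⟩
end
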